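/- arXiv:2604.03170 — 6 statements merged into one kernel-verified Lean document; each statement's English description precedes it below -/
import Mathlib

section
/- Let X be an integrable real random variable with E[X] = 0 and P(|X| > t) ≤ min{1, 2·e^{-t²/2}} for all t ≥ 0, and let G be a standard normal random variable. Then for every convex function f : ℝ → ℝ such that E[f(c₀·G)] is finite, E[f(X)] ≤ E[f(c₀·G)], where c₀ is the sharp one-dimensional sub-Gaussian comparison constant. -/
open MeasureTheory ProbabilityTheory Real Set

/-- The standard normal density `φ(x) = (2π)^{-1/2} e^{-x²/2}`. -/
noncomputable def stdNormalPDF (x : ℝ) : ℝ :=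
  (Real.sqrt (2 * Real.pi))⁻¹ * Real.exp (-x ^ 2 / 2)

/-- The Gaussian tail `Φ̄(x) = ∫_x^∞ φ(t) dt`. -/
noncomputable def gaussTail (x : ℝ) : ℝ := ∫ t in Set.Ioi x, stdNormalPDF t

/-- `B = A/2`, where `A = t₀ + 2 ∫_{t₀}^∞ e^{-t²/2} dt` and `t₀ = √(2 log 2)`. -/
noncomputable def Bconst : ℝ :=
  Real.sqrt (2 * Real.log 2) / 2 +
    ∫ t in Set.Ioi (Real.sqrt (2 * Real.log 2)), Real.exp (-t ^ 2 / 2)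

/-- `H(x) = 2x e^{-x²/2} + 2 ∫_x^∞ e^{-t²/2} dt`. -/
noncomputable def Hfun (x : ℝ) : ℝ :=
  2 * x * Real.exp (-x ^ 2 / 2) + 2 * ∫ t in Set.Ioi x, Real.exp (-t ^ 2 / 2)


/-!
Stop-loss order implies convex order: if `E X = E Y` and `E (X - t)⁺ ≤ E (Y - t)⁺` for all `t`,
then `E f(X) ≤ E f(Y)` for convex `f`. Indeed `f` is the pointwise limit of maxima of finitely
many of its tangent lines at sorted points, each new tangent adds a nonnegative multiple of a
ramp `(x - c)⁺`, and Fatou's lemma passes to the limit.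

It thus suffices to show `E (X - t)⁺ ≤ E (c₀ G - t)⁺ = c₀ ψ(t / c₀)`, `ψ(u) = φ(u) - u Φ̄(u)`.
The tail bound gives `E (X - t)⁺ ≤ 2 ∫_t^∞ e^{-s²/2} ds` for `t ≥ 0`; for `t ≥ a` this stays
below `c₀ ψ(t / c₀)` since the difference is nonnegative at `a`, vanishes at `∞`, and by Mills'
ratio its derivative changes sign at most once. On `[0, a]`, convexity of `t ↦ E (X - t)⁺`,
`E X⁺ = E |X| / 2 ≤ B` and `H(a) = B` bound it by the line `B - p₀ t`, which is the tangent of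
`c₀ ψ(· / c₀)` at `c₀ z`. Negative `t` follow from `E X = 0` and the symmetry `X ↦ -X`.
-/

open Filter Topology

/-! ### Convex order from stop-loss order -/

section ConvexOrder

variable {f : ℝ → ℝ}

noncomputable def rightTangent (f : ℝ → ℝ) (p x : ℝ) : ℝ :=
  f p + derivWithin f (Ioi p) p * (x - p)

lemma ConvexOn.rightDeriv_mono (hf : ConvexOn ℝ univ f) :
    Monotone fun x => derivWithin f (Ioi x) x := fun x y hxy =>
  hf.monotoneOn_rightDeriv (by simp) (by simp) hxy

lemma ConvexOn.rightTangent_le (hf : ConvexOn ℝ univ f) (p x : ℝ) : rightTangent f p x ≤ f x := by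
  unfold rightTangent
  rcases lt_trichotomy p x with hpx | rfl | hxp
  · have h := hf.rightDeriv_le_slope_of_mem_interior (by simp) (mem_univ x) hpx
    rw [slope_def_field, le_div_iff₀ (sub_pos.2 hpx)] at h
    linarith
  · simp
  · have h := (hf.slope_le_leftDeriv_of_mem_interior (mem_univ x) (by simp) hxp).trans
      (hf.leftDeriv_le_rightDeriv_of_mem_interior (by simp))
    rw [slope_def_field, div_le_iff₀ (sub_pos.2 hxp)] at h
    linarith

lemma ConvexOn.rightTangent_le_rightTangent (hf : ConvexOn ℝ univ f) {p q x : ℝ}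
    (hq : q ∈ uIcc p x) : rightTangent f p x ≤ rightTangent f q x := by
  have hpq := hf.rightTangent_le p q
  unfold rightTangent at *
  rcases mem_uIcc.1 hq with ⟨hpq', hqx⟩ | ⟨hxq, hqp⟩
  · nlinarith [hf.rightDeriv_mono hpq']
  · nlinarith [hf.rightDeriv_mono hqp]

noncomputable def maxTangent (f : ℝ → ℝ) (s : ℕ → ℝ) : ℕ → ℝ → ℝ
  | 0, x => rightTangent f (s 0) x
  | n + 1, x => max (maxTangent f s n x) (rightTangent f (s (n + 1)) x)

lemma ConvexOn.maxTangent_le (hf : ConvexOn ℝ univ f) (s : ℕ → ℝ) (n : ℕ) (x : ℝ) :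
    maxTangent f s n x ≤ f x := by
  induction n with
  | zero => exact hf.rightTangent_le _ x
  | succ n ih => exact max_le ih (hf.rightTangent_le _ x)

lemma rightTangent_le_maxTangent (s : ℕ → ℝ) {i n : ℕ} (hin : i ≤ n) (x : ℝ) :
    rightTangent f (s i) x ≤ maxTangent f s n x := by
  induction n with
  | zero => rw [Nat.le_zero.1 hin]; rfl
  | succ n ih =>
    rcases hin.lt_or_eq with hin | rfl
    · exact (ih (Nat.lt_succ_iff.1 hin)).trans (le_max_left _ _)
    · exact le_max_right _ _

lemma ConvexOn.maxTangent_of_le (hf : ConvexOn ℝ univ f) {s : ℕ → ℝ} (hs : Monotone s)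
    {n : ℕ} {x : ℝ} (hx : s n ≤ x) : maxTangent f s n x = rightTangent f (s n) x := by
  induction n with
  | zero => rfl
  | succ n ih =>
    rw [maxTangent, ih ((hs n.le_succ).trans hx)]
    exact max_eq_right (hf.rightTangent_le_rightTangent (mem_uIcc.2 (.inl ⟨hs n.le_succ, hx⟩)))

/-- The increment is a nonnegative multiple of a ramp `(x - c)⁺`: the positive part of an affine
function whose slope is an increment of the right derivative. -/
lemma ConvexOn.maxTangent_succ (hf : ConvexOn ℝ univ f) {s : ℕ → ℝ} (hs : Monotone s)
    (n : ℕ) (x : ℝ) : maxTangent f s (n + 1) x = maxTangent f s n x +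
      max (rightTangent f (s (n + 1)) x - rightTangent f (s n) x) 0 := by
  rw [maxTangent]
  rcases le_total (s n) x with hx | hx
  · rw [hf.maxTangent_of_le hs hx]
    rcases le_total (rightTangent f (s n) x) (rightTangent f (s (n + 1)) x) with h | h
    · rw [max_eq_right h, max_eq_left (sub_nonneg.2 h)]; ring
    · rw [max_eq_left h, max_eq_right (sub_nonpos.2 h)]; ring
  · have h := hf.rightTangent_le_rightTangent (mem_uIcc.2 (.inr ⟨hx, hs n.le_succ⟩))
    rw [max_eq_left (h.trans (rightTangent_le_maxTangent s le_rfl x)),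
      max_eq_right (sub_nonpos.2 h), add_zero]

lemma rightTangent_eq (f : ℝ → ℝ) (p x : ℝ) : rightTangent f p x =
    (f p - derivWithin f (Ioi p) p * p) + derivWithin f (Ioi p) p * x := by
  unfold rightTangent; ring

/-- For `k ≤ 2 n²` these points have mesh `1 / n`, cover `[-n, n]` and contain `0` (`k = n²`). -/
noncomputable def grid (n k : ℕ) : ℝ := k / n - n

lemma grid_mono (n : ℕ) : Monotone (grid n) := fun k l hkl => by
  unfold grid; gcongr

lemma grid_sq (n : ℕ) : grid n (n ^ 2) = 0 := by
  rcases eq_or_ne (n : ℝ) 0 with h | h <;> simp [grid, h, sq]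

noncomputable def tangentApprox (f : ℝ → ℝ) (n : ℕ) : ℝ → ℝ := maxTangent f (grid n) (2 * n ^ 2)

lemma rightTangent_zero_le_tangentApprox (n : ℕ) (x : ℝ) :
    rightTangent f 0 x ≤ tangentApprox f n x := by
  have h := rightTangent_le_maxTangent (f := f) (grid n) (i := n ^ 2) (n := 2 * n ^ 2) (by omega) x
  rwa [grid_sq] at h

lemma ConvexOn.sub_le_tangentApprox (hf : ConvexOn ℝ univ f) {n : ℕ} {x : ℝ}
    (hn : |x| + 1 ≤ n) :
    f x - (derivWithin f (Ioi (x + 1)) (x + 1) - derivWithin f (Ioi x) x) / n ≤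
      tangentApprox f n x := by
  set D := fun y => derivWithin f (Ioi y) y
  have hn0 : (0 : ℝ) < n := by linarith [abs_nonneg x]
  obtain ⟨hxl, hxu⟩ := abs_le.1 (show |x| ≤ n - 1 by linarith)
  set k := ⌈(x + n) * n⌉₊
  have hk : (x + n) * n ≤ k := Nat.le_ceil _
  have hk' : (k : ℝ) < (x + n) * n + 1 := Nat.ceil_lt_add_one (by nlinarith)
  have hxp : x ≤ grid n k := by
    rw [grid, le_sub_iff_add_le, le_div_iff₀ hn0]; linarith
  have hpx : grid n k - x ≤ 1 / n := by
    rw [grid, sub_sub, sub_le_iff_le_add, div_add' _ _ _ hn0.ne', div_le_div_iff_of_pos_right hn0]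
    nlinarith
  have hkn : k ≤ 2 * n ^ 2 := by
    apply Nat.ceil_le.2
    push_cast
    nlinarith
  have hD : 0 ≤ D (grid n k) - D x := sub_nonneg.2 (hf.rightDeriv_mono hxp)
  have hD' : D (grid n k) - D x ≤ D (x + 1) - D x := by
    have : grid n k ≤ x + 1 := by
      have : 1 / (n : ℝ) ≤ 1 := (div_le_one hn0).2 (by linarith [abs_nonneg x])
      linarith
    linarith [hf.rightDeriv_mono this]
  have htan := hf.rightTangent_le x (grid n k)
  calc f x - (D (x + 1) - D x) / n
      ≤ f x - (D (grid n k) - D x) * (grid n k - x) := by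
        rw [div_eq_mul_one_div]
        gcongr
        nlinarith
    _ ≤ rightTangent f (grid n k) x := by
        unfold rightTangent at *; nlinarith
    _ ≤ tangentApprox f n x := rightTangent_le_maxTangent _ hkn x

lemma ConvexOn.tendsto_tangentApprox (hf : ConvexOn ℝ univ f) (x : ℝ) :
    Tendsto (fun n => tangentApprox f n x) atTop (𝓝 (f x)) := by
  have hlow : Tendsto (fun n : ℕ => f x - (derivWithin f (Ioi (x + 1)) (x + 1) -
      derivWithin f (Ioi x) x) / n) atTop (𝓝 (f x)) := by
    simpa using tendsto_const_nhds.sub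
      (tendsto_const_div_atTop_nhds_zero_nat (derivWithin f (Ioi (x + 1)) (x + 1) -
        derivWithin f (Ioi x) x))
  refine tendsto_of_tendsto_of_tendsto_of_le_of_le' hlow tendsto_const_nhds ?_
    (.of_forall fun n => hf.maxTangent_le _ _ x)
  filter_upwards [(tendsto_natCast_atTop_atTop (R := ℝ)).eventually_ge_atTop (|x| + 1)]
    with n hn using hf.sub_le_tangentApprox hn

lemma integrable_and_integral_le_of_tendsto {Ω : Type*} [MeasurableSpace Ω] {μ : Measure Ω}
    {F : ℕ → Ω → ℝ} {G : Ω → ℝ} {c : ℝ} (hF0 : ∀ n ω, 0 ≤ F n ω)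
    (hF : ∀ n, Integrable (F n) μ) (hG : AEStronglyMeasurable G μ)
    (hlim : ∀ ω, Tendsto (fun n => F n ω) atTop (𝓝 (G ω))) (hc : ∀ n, ∫ ω, F n ω ∂μ ≤ c) :
    Integrable G μ ∧ ∫ ω, G ω ∂μ ≤ c := by
  have hG0 : ∀ ω, 0 ≤ G ω := fun ω => ge_of_tendsto' (hlim ω) fun n => hF0 n ω
  have hfatou : ∫⁻ ω, ENNReal.ofReal (G ω) ∂μ ≤ ENNReal.ofReal c :=
    calc ∫⁻ ω, ENNReal.ofReal (G ω) ∂μ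
        = ∫⁻ ω, liminf (fun n => ENNReal.ofReal (F n ω)) atTop ∂μ := by
          refine lintegral_congr fun ω => ?_
          exact (((ENNReal.continuous_ofReal.tendsto _).comp (hlim ω)).liminf_eq).symm
      _ ≤ liminf (fun n => ∫⁻ ω, ENNReal.ofReal (F n ω) ∂μ) atTop :=
          lintegral_liminf_le' fun n => (hF n).aemeasurable.ennreal_ofReal
      _ ≤ ENNReal.ofReal c := by
          refine liminf_le_of_frequently_le' (.of_forall fun n => ?_)
          rw [← ofReal_integral_eq_lintegral_ofReal (hF n) (.of_forall (hF0 n))]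
          exact ENNReal.ofReal_le_ofReal (hc n)
  have hGi : Integrable G μ := ⟨hG, (hasFiniteIntegral_iff_ofReal (.of_forall hG0)).2
    (hfatou.trans_lt ENNReal.ofReal_lt_top)⟩
  refine ⟨hGi, ?_⟩
  rw [integral_eq_lintegral_of_nonneg_ae (.of_forall hG0) hG]
  exact ENNReal.toReal_le_of_le_ofReal ((integral_nonneg (hF0 0)).trans (hc 0)) hfatou

noncomputable def stopLoss {Ω : Type*} [MeasurableSpace Ω] (μ : Measure Ω) (X : Ω → ℝ)
    (t : ℝ) : ℝ :=
  ∫ ω, max (X ω - t) 0 ∂μ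

section Integrals

variable {Ω Ω' : Type*} [MeasurableSpace Ω] [MeasurableSpace Ω'] {μ : Measure Ω}
  {ν : Measure Ω'} [IsProbabilityMeasure μ] [IsProbabilityMeasure ν] {X : Ω → ℝ} {Y : Ω' → ℝ}

lemma integrable_affine_comp (hX : Integrable X μ) (α β : ℝ) :
    Integrable (fun ω => α + β * X ω) μ :=
  (integrable_const α).add (hX.const_mul β)

lemma integral_affine_comp (hX : Integrable X μ) (α β : ℝ) :
    ∫ ω, (α + β * X ω) ∂μ = α + β * ∫ ω, X ω ∂μ := by
  rw [integral_add (integrable_const α) (hX.const_mul β), integral_const, integral_const_mul]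
  simp

lemma integral_max_affine_le (hsl : ∀ t, stopLoss μ X t ≤ stopLoss ν Y t) (α : ℝ) {β : ℝ}
    (hβ : 0 ≤ β) : ∫ ω, max (α + β * X ω) 0 ∂μ ≤ ∫ ω, max (α + β * Y ω) 0 ∂ν := by
  rcases hβ.eq_or_lt with rfl | hβ
  · simp
  have key : ∀ x, max (α + β * x) 0 = β * max (x - -α / β) 0 := fun x => by
    rw [mul_max_of_nonneg _ _ hβ.le, mul_zero]
    congr 1
    field_simp
    ring
  simp_rw [key, integral_const_mul]
  exact mul_le_mul_of_nonneg_left (hsl _) hβ.le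

lemma integrable_maxTangent_comp (hX : Integrable X μ) (s : ℕ → ℝ) (n : ℕ) :
    Integrable (fun ω => maxTangent f s n (X ω)) μ := by
  induction n with
  | zero => simpa only [maxTangent, rightTangent_eq] using integrable_affine_comp hX _ _
  | succ n ih =>
    simp only [maxTangent, rightTangent_eq]
    exact ih.sup (integrable_affine_comp hX _ _)

lemma ConvexOn.integral_maxTangent_comp_le (hf : ConvexOn ℝ univ f) (hX : Integrable X μ)
    (hY : Integrable Y ν) (hmean : ∫ ω, X ω ∂μ = ∫ ω, Y ω ∂ν)
    (hsl : ∀ t, stopLoss μ X t ≤ stopLoss ν Y t) {s : ℕ → ℝ} (hs : Monotone s) (n : ℕ) :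
    ∫ ω, maxTangent f s n (X ω) ∂μ ≤ ∫ ω, maxTangent f s n (Y ω) ∂ν := by
  induction n with
  | zero =>
    change ∫ ω, rightTangent f (s 0) (X ω) ∂μ ≤ ∫ ω, rightTangent f (s 0) (Y ω) ∂ν
    simp only [rightTangent_eq, integral_affine_comp hX, integral_affine_comp hY, hmean, le_refl]
  | succ n ih =>
    set D := fun y => derivWithin f (Ioi y) y
    obtain ⟨α, hdiff⟩ : ∃ α, ∀ x, rightTangent f (s (n + 1)) x - rightTangent f (s n) x =
        α + (D (s (n + 1)) - D (s n)) * x :=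
      ⟨f (s (n + 1)) - D (s (n + 1)) * s (n + 1) - (f (s n) - D (s n) * s n),
        fun x => by simp only [rightTangent_eq, D]; ring⟩
    have hmX : Integrable (fun ω => max (α + (D (s (n + 1)) - D (s n)) * X ω) 0) μ :=
      (integrable_affine_comp hX _ _).sup (integrable_const 0)
    have hmY : Integrable (fun ω => max (α + (D (s (n + 1)) - D (s n)) * Y ω) 0) ν :=
      (integrable_affine_comp hY _ _).sup (integrable_const 0)
    simp_rw [hf.maxTangent_succ hs, hdiff]
    rw [integral_add (integrable_maxTangent_comp hX s n) hmX,
      integral_add (integrable_maxTangent_comp hY s n) hmY]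
    exact add_le_add ih
      (integral_max_affine_le hsl _ (sub_nonneg.2 (hf.rightDeriv_mono (hs n.le_succ))))

theorem ConvexOn.integral_comp_le_of_stopLoss_le (hf : ConvexOn ℝ univ f) (hX : Integrable X μ)
    (hY : Integrable Y ν) (hmean : ∫ ω, X ω ∂μ = ∫ ω, Y ω ∂ν)
    (hsl : ∀ t, stopLoss μ X t ≤ stopLoss ν Y t) (hfY : Integrable (fun ω => f (Y ω)) ν) :
    ∫ ω, f (X ω) ∂μ ≤ ∫ ω, f (Y ω) ∂ν := by
  set ℓ := rightTangent f 0
  have hℓX : Integrable (fun ω => ℓ (X ω)) μ := by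
    simpa only [ℓ, rightTangent_eq] using integrable_affine_comp hX _ _
  have hℓY : Integrable (fun ω => ℓ (Y ω)) ν := by
    simpa only [ℓ, rightTangent_eq] using integrable_affine_comp hY _ _
  have hℓ : ∫ ω, ℓ (X ω) ∂μ = ∫ ω, ℓ (Y ω) ∂ν := by
    simp only [ℓ, rightTangent_eq, integral_affine_comp hX, integral_affine_comp hY, hmean]
  have hfc : Continuous f := continuousOn_univ.1 (hf.continuousOn isOpen_univ)
  obtain ⟨hGi, hG⟩ := integrable_and_integral_le_of_tendsto
    (F := fun n ω => tangentApprox f n (X ω) - ℓ (X ω))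
    (G := fun ω => f (X ω) - ℓ (X ω)) (c := ∫ ω, (f (Y ω) - ℓ (Y ω)) ∂ν)
    (fun n ω => sub_nonneg.2 (rightTangent_zero_le_tangentApprox n _))
    (fun n => (integrable_maxTangent_comp hX _ _).sub hℓX)
    ((hfc.comp_aestronglyMeasurable hX.1).sub hℓX.1)
    (fun ω => (hf.tendsto_tangentApprox _).sub_const _)
    (fun n => by
      unfold tangentApprox
      rw [integral_sub (integrable_maxTangent_comp hX _ _) hℓX, integral_sub hfY hℓY, hℓ]
      gcongr
      exact (hf.integral_maxTangent_comp_le hX hY hmean hsl (grid_mono n) _).trans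
        (integral_mono (integrable_maxTangent_comp hY _ _) hfY
          fun ω => hf.maxTangent_le _ _ _))
  have hfX : Integrable (fun ω => f (X ω)) μ := (hGi.add hℓX).congr (.of_forall fun ω => by simp)
  rw [integral_sub hfX hℓX, integral_sub hfY hℓY, hℓ] at hG
  linarith

end Integrals

end ConvexOrder

/-! ### The Gaussian tail and stop-loss function -/

lemma stdNormalPDF_eq_gaussianPDFReal : stdNormalPDF = gaussianPDFReal 0 1 := by
  funext x
  simp [stdNormalPDF, gaussianPDFReal, mul_comm]

lemma stdNormalPDF_pos (x : ℝ) : 0 < stdNormalPDF x := by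
  rw [stdNormalPDF_eq_gaussianPDFReal]
  exact gaussianPDFReal_pos _ _ _ one_ne_zero

lemma sqrt_two_pi_mul_stdNormalPDF (x : ℝ) :
    √(2 * π) * stdNormalPDF x = exp (-x ^ 2 / 2) := by
  have : 0 < √(2 * π) := by positivity
  rw [stdNormalPDF]
  field_simp

lemma continuous_stdNormalPDF : Continuous stdNormalPDF := by
  unfold stdNormalPDF
  fun_prop

lemma integrable_stdNormalPDF : Integrable stdNormalPDF := by
  rw [stdNormalPDF_eq_gaussianPDFReal]
  exact integrable_gaussianPDFReal 0 1

lemma integrable_mul_stdNormalPDF : Integrable fun x => x * stdNormalPDF x := by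
  refine ((integrable_mul_exp_neg_mul_sq (b := 1 / 2) (by norm_num)).const_mul
    (√(2 * π))⁻¹).congr (.of_forall fun x => ?_)
  simp only [stdNormalPDF]
  ring_nf

lemma hasDerivAt_stdNormalPDF (x : ℝ) :
    HasDerivAt stdNormalPDF (-x * stdNormalPDF x) x := by
  have h : HasDerivAt (fun y : ℝ => -y ^ 2 / 2) (-x) x := by
    simpa using (((hasDerivAt_pow 2 x).neg).div_const 2).congr_deriv (by ring)
  exact (h.exp.const_mul _).congr_deriv (by simp only [stdNormalPDF]; ring)

lemma tendsto_stdNormalPDF_atTop : Tendsto stdNormalPDF atTop (𝓝 0) := by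
  have h : Tendsto (fun x : ℝ => x ^ 2 / 2) atTop atTop :=
    (tendsto_pow_atTop two_ne_zero).atTop_div_const two_pos
  have := (tendsto_exp_neg_atTop_nhds_zero.comp h).const_mul (√(2 * π))⁻¹
  rw [mul_zero] at this
  exact this.congr fun x => by simp [stdNormalPDF, neg_div]

lemma setIntegral_Ioi_mul_stdNormalPDF (u : ℝ) :
    ∫ x in Ioi u, x * stdNormalPDF x = stdNormalPDF u := by
  rw [integral_Ioi_of_hasDerivAt_of_tendsto (f := fun x => -stdNormalPDF x) (m := 0)
    continuous_stdNormalPDF.neg.continuousWithinAt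
    (fun x _ => (hasDerivAt_stdNormalPDF x).neg.congr_deriv (by ring))
    integrable_mul_stdNormalPDF.integrableOn (by simpa using tendsto_stdNormalPDF_atTop.neg)]
  ring

lemma gaussTail_eq_sub_intervalIntegral (x y : ℝ) :
    gaussTail y = gaussTail x - ∫ u in x..y, stdNormalPDF u := by
  have key : ∀ {p q : ℝ}, p ≤ q →
      gaussTail p = (∫ u in Ioc p q, stdNormalPDF u) + gaussTail q := fun hpq => by
    rw [gaussTail, ← Ioc_union_Ioi_eq_Ioi hpq, setIntegral_union (Ioc_disjoint_Ioi le_rfl)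
      measurableSet_Ioi integrable_stdNormalPDF.integrableOn integrable_stdNormalPDF.integrableOn]
    rfl
  rcases le_total x y with h | h
  · rw [intervalIntegral.integral_of_le h, key h]; ring
  · rw [intervalIntegral.integral_of_ge h, key h]; ring

lemma hasDerivAt_gaussTail (x : ℝ) : HasDerivAt gaussTail (-stdNormalPDF x) x := by
  rw [show gaussTail = fun y => gaussTail x - ∫ u in x..y, stdNormalPDF u from
    funext (gaussTail_eq_sub_intervalIntegral x)]
  exact (intervalIntegral.integral_hasDerivAt_right integrable_stdNormalPDF.intervalIntegrable
    (continuous_stdNormalPDF.stronglyMeasurableAtFilter _ _)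
    continuous_stdNormalPDF.continuousAt).const_sub _

lemma gaussTail_nonneg (x : ℝ) : 0 ≤ gaussTail x :=
  setIntegral_nonneg measurableSet_Ioi fun t _ => (stdNormalPDF_pos t).le

lemma tendsto_gaussTail_atTop : Tendsto gaussTail atTop (𝓝 0) := by
  have h := (tendsto_const_nhds (x := gaussTail 0)).sub (intervalIntegral_tendsto_integral_Ioi 0
    integrable_stdNormalPDF.integrableOn tendsto_id)
  rw [gaussTail, sub_self] at h
  exact h.congr fun y => (gaussTail_eq_sub_intervalIntegral 0 y).symm

lemma setIntegral_Ioi_exp_neg_sq_div_two (x : ℝ) :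
    ∫ t in Ioi x, exp (-t ^ 2 / 2) = √(2 * π) * gaussTail x := by
  rw [gaussTail, ← integral_const_mul]
  simp_rw [sqrt_two_pi_mul_stdNormalPDF]

/-- Mills' ratio lower bound; `gaussTail - x φ / (x² + 1)` has derivative `-2φ / (x² + 1)²`. -/
lemma mul_stdNormalPDF_div_le_gaussTail (x : ℝ) :
    x * stdNormalPDF x / (x ^ 2 + 1) ≤ gaussTail x := by
  set k := fun y => gaussTail y - y * stdNormalPDF y / (y ^ 2 + 1)
  have hk : Antitone k := by
    refine antitone_of_hasDerivAt_nonpos (f' := fun y => -2 * stdNormalPDF y / (y ^ 2 + 1) ^ 2)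
      (fun y => ?_) fun y => ?_
    · have hy : y ^ 2 + 1 ≠ 0 := by positivity
      have h := (hasDerivAt_gaussTail y).sub (((hasDerivAt_id' y).mul
        (hasDerivAt_stdNormalPDF y)).div (((hasDerivAt_id' y).pow 2).add_const 1) hy)
      exact h.congr_deriv (by simp only [Pi.mul_apply, Pi.pow_apply]; field_simp; ring)
    · have := stdNormalPDF_pos y
      simp only [Pi.zero_apply]
      apply div_nonpos_of_nonpos_of_nonneg <;> nlinarith
  have hlim : Tendsto k atTop (𝓝 0) := by
    have h : Tendsto (fun y => y * stdNormalPDF y / (y ^ 2 + 1)) atTop (𝓝 0) := by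
      refine tendsto_of_tendsto_of_tendsto_of_le_of_le' tendsto_const_nhds
        tendsto_stdNormalPDF_atTop ?_ ?_ <;>
        filter_upwards [eventually_ge_atTop 0] with y hy <;> have := stdNormalPDF_pos y
      · positivity
      · rw [div_le_iff₀ (by positivity)]
        nlinarith [sq_nonneg (y - 1)]
    simpa using tendsto_gaussTail_atTop.sub h
  linarith [hk.le_of_tendsto hlim x]

noncomputable def gaussStopLoss (u : ℝ) : ℝ := stdNormalPDF u - u * gaussTail u

lemma setIntegral_Ioi_sub_mul_stdNormalPDF (z u : ℝ) :
    ∫ x in Ioi z, (x - u) * stdNormalPDF x = stdNormalPDF z - u * gaussTail z := by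
  simp_rw [sub_mul]
  rw [integral_sub integrable_mul_stdNormalPDF.integrableOn
    (integrable_stdNormalPDF.const_mul u).integrableOn, integral_const_mul,
    setIntegral_Ioi_mul_stdNormalPDF, gaussTail]

lemma integrable_sub_mul_stdNormalPDF (u : ℝ) : Integrable fun x => (x - u) * stdNormalPDF x := by
  simp_rw [sub_mul]
  exact integrable_mul_stdNormalPDF.sub (integrable_stdNormalPDF.const_mul u)

lemma integral_max_sub_gaussianReal (u : ℝ) :
    ∫ x, max (x - u) 0 ∂gaussianReal 0 1 = gaussStopLoss u := by
  rw [integral_gaussianReal_eq_integral_smul one_ne_zero, ← stdNormalPDF_eq_gaussianPDFReal,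
    gaussStopLoss, ← setIntegral_Ioi_sub_mul_stdNormalPDF, ← integral_indicator measurableSet_Ioi]
  congr with x
  by_cases hx : u < x
  · rw [indicator_of_mem (mem_Ioi.2 hx), max_eq_left (by linarith), smul_eq_mul, mul_comm]
  · rw [indicator_of_notMem (by simpa using hx), max_eq_right (by linarith), smul_zero]

lemma gaussStopLoss_nonneg (u : ℝ) : 0 ≤ gaussStopLoss u := by
  rw [gaussStopLoss, ← setIntegral_Ioi_sub_mul_stdNormalPDF]
  exact setIntegral_nonneg measurableSet_Ioi fun x hx =>
    mul_nonneg (sub_nonneg.2 (le_of_lt hx)) (stdNormalPDF_pos x).le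

/-- `E[(G - u)⁺] ≥ E[(G - u) 1{G > z}]`: the tangent line of `gaussStopLoss` at `z`. -/
lemma sub_mul_gaussTail_le_gaussStopLoss (z u : ℝ) :
    stdNormalPDF z - u * gaussTail z ≤ gaussStopLoss u := by
  rw [gaussStopLoss, ← setIntegral_Ioi_sub_mul_stdNormalPDF, ← setIntegral_Ioi_sub_mul_stdNormalPDF,
    ← integral_indicator measurableSet_Ioi, ← integral_indicator measurableSet_Ioi]
  refine integral_mono ((integrable_sub_mul_stdNormalPDF u).indicator measurableSet_Ioi)
    ((integrable_sub_mul_stdNormalPDF u).indicator measurableSet_Ioi) fun x => ?_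
  have := stdNormalPDF_pos x
  simp only [indicator, mem_Ioi]
  split_ifs <;> nlinarith

lemma mul_stdNormalPDF_sub_le_mul_gaussStopLoss {c : ℝ} (hc : 0 < c) (z t : ℝ) :
    c * stdNormalPDF z - gaussTail z * t ≤ c * gaussStopLoss (t / c) := by
  calc c * stdNormalPDF z - gaussTail z * t = c * (stdNormalPDF z - t / c * gaussTail z) := by
        field_simp
    _ ≤ c * gaussStopLoss (t / c) := by
        gcongr
        exact sub_mul_gaussTail_le_gaussStopLoss z (t / c)

lemma hasDerivAt_gaussStopLoss (u : ℝ) : HasDerivAt gaussStopLoss (-gaussTail u) u :=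
  ((hasDerivAt_stdNormalPDF u).sub ((hasDerivAt_id' u).mul (hasDerivAt_gaussTail u))).congr_deriv
    (by ring)

lemma tendsto_gaussStopLoss_atTop : Tendsto gaussStopLoss atTop (𝓝 0) := by
  refine tendsto_of_tendsto_of_tendsto_of_le_of_le' tendsto_const_nhds tendsto_stdNormalPDF_atTop
    (.of_forall gaussStopLoss_nonneg) ?_
  filter_upwards [eventually_ge_atTop 0] with u hu
  rw [gaussStopLoss]
  linarith [mul_nonneg hu (gaussTail_nonneg u)]

lemma integral_max_mul_sub_gaussianReal {c : ℝ} (hc : 0 < c) (t : ℝ) :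
    ∫ x, max (c * x - t) 0 ∂gaussianReal 0 1 = c * gaussStopLoss (t / c) := by
  have h : ∀ x, max (c * x - t) 0 = c * max (x - t / c) 0 := fun x => by
    rw [mul_max_of_nonneg _ _ hc.le, mul_zero, mul_sub, mul_div_cancel₀ _ hc.ne']
  simp_rw [h, integral_const_mul, integral_max_sub_gaussianReal]

/-! ### The Gaussian stop-loss function against the tail envelope -/

lemma nonneg_of_hasDerivAt_of_tendsto_atTop {D D' : ℝ → ℝ} {a t : ℝ}
    (hD : ∀ x, HasDerivAt D (D' x) x) (hlim : Tendsto D atTop (𝓝 0)) (ha : 0 ≤ D a)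
    (hsign : ∀ x y, a ≤ x → x ≤ y → D' x ≤ 0 → D' y ≤ 0) (ht : a ≤ t) : 0 ≤ D t := by
  have hc : Continuous D := continuous_iff_continuousAt.2 fun x => (hD x).continuousAt
  by_cases h : D' t ≤ 0
  · have hanti : AntitoneOn D (Ici t) :=
      antitoneOn_of_hasDerivWithinAt_nonpos (convex_Ici t) hc.continuousOn
        (fun x _ => (hD x).hasDerivWithinAt) fun x hx => hsign t x ht (interior_subset hx) h
    exact le_of_tendsto hlim (eventually_atTop.2 ⟨t, fun y hy => hanti (mem_Ici.2 le_rfl) hy hy⟩)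
  · have hmono : MonotoneOn D (Icc a t) :=
      monotoneOn_of_hasDerivWithinAt_nonneg (convex_Icc a t) hc.continuousOn
        (fun x _ => (hD x).hasDerivWithinAt) fun x hx => by
          rw [interior_Icc] at hx
          by_contra! hneg
          exact h (hsign x t hx.1.le hx.2.le hneg.le)
    exact ha.trans (hmono (left_mem_Icc.2 ht) (right_mem_Icc.2 ht) ht)

/-- By Mills' ratio, as `c ≥ 2` and `x² ≥ 4/3` give `(x / c)² + 1 ≤ x²`. -/
lemma monotoneOn_gaussTail_div_mul_exp {a c : ℝ} (hc : 2 ≤ c) (ha0 : 0 < a)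
    (ha : 4 / 3 ≤ a ^ 2) : MonotoneOn (fun x => gaussTail (x / c) * exp (x ^ 2 / 2)) (Ici a) := by
  have hc0 : 0 < c := by linarith
  have hG : ∀ x, HasDerivAt (fun x => gaussTail (x / c) * exp (x ^ 2 / 2))
      (exp (x ^ 2 / 2) * (x * gaussTail (x / c) - stdNormalPDF (x / c) / c)) x := fun x => by
    have h1 := (hasDerivAt_gaussTail (x / c)).comp x ((hasDerivAt_id' x).div_const c)
    have h2 : HasDerivAt (fun x : ℝ => x ^ 2 / 2) x x := by
      simpa using ((hasDerivAt_pow 2 x).div_const 2).congr_deriv (by ring)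
    exact (h1.mul h2.exp).congr_deriv (by simp only [Function.comp_apply]; ring)
  refine monotoneOn_of_hasDerivWithinAt_nonneg (convex_Ici a)
    (fun x _ => (hG x).continuousAt.continuousWithinAt) (fun x _ => (hG x).hasDerivWithinAt)
    fun x hx => ?_
  · rw [interior_Ici] at hx
    set u := x / c
    have hxu : x = c * u := by simp only [u]; field_simp
    have hu : 0 < u := div_pos (ha0.trans hx) hc0
    have hφ := stdNormalPDF_pos u
    have hmills := mul_stdNormalPDF_div_le_gaussTail u
    rw [div_le_iff₀ (by positivity)] at hmills
    have hx2 : u ^ 2 + 1 ≤ c ^ 2 * u ^ 2 := by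
      have : a ^ 2 ≤ x ^ 2 := pow_le_pow_left₀ ha0.le (le_of_lt hx) 2
      rw [hxu] at this
      nlinarith [mul_nonneg (sub_nonneg.2 (show 4 ≤ c ^ 2 by nlinarith)) (sq_nonneg u)]
    have key : stdNormalPDF u ≤ c ^ 2 * u * gaussTail u := by
      nlinarith [mul_le_mul_of_nonneg_left hmills (by positivity : (0 : ℝ) ≤ c ^ 2 * u)]
    refine mul_nonneg (exp_pos _).le (sub_nonneg.2 ?_)
    rw [div_le_iff₀ hc0, hxu]
    linarith

lemma two_mul_gaussTail_le_gaussStopLoss {a c t : ℝ} (hc : 2 ≤ c) (ha0 : 0 < a)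
    (ha : 4 / 3 ≤ a ^ 2) (hat : 2 * √(2 * π) * gaussTail a ≤ c * gaussStopLoss (a / c))
    (ht : a ≤ t) : 2 * √(2 * π) * gaussTail t ≤ c * gaussStopLoss (t / c) := by
  have hc0 : 0 < c := by linarith
  set G := fun x => gaussTail (x / c) * exp (x ^ 2 / 2)
  have hD : ∀ x, HasDerivAt (fun x => c * gaussStopLoss (x / c) - 2 * √(2 * π) * gaussTail x)
      (exp (-x ^ 2 / 2) * (2 - G x)) x := fun x => by
    have h := (((hasDerivAt_gaussStopLoss (x / c)).comp x
      ((hasDerivAt_id' x).div_const c)).const_mul c).sub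
      ((hasDerivAt_gaussTail x).const_mul (2 * √(2 * π)))
    refine h.congr_deriv ?_
    have he : exp (-x ^ 2 / 2) * exp (x ^ 2 / 2) = 1 := by rw [← exp_add]; ring_nf; exact exp_zero
    have hφ := sqrt_two_pi_mul_stdNormalPDF x
    rw [show c * (-gaussTail (x / c) * (1 / c)) = -gaussTail (x / c) by field_simp]
    simp only [G]
    linear_combination 2 * hφ + gaussTail (x / c) * he
  have hsign : ∀ x y, a ≤ x → x ≤ y → exp (-x ^ 2 / 2) * (2 - G x) ≤ 0 →
      exp (-y ^ 2 / 2) * (2 - G y) ≤ 0 := fun x y hax hxy h => by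
    have hGx : 2 ≤ G x := by nlinarith [exp_pos (-x ^ 2 / 2)]
    have hGy := hGx.trans (monotoneOn_gaussTail_div_mul_exp hc ha0 ha hax (hax.trans hxy) hxy)
    exact mul_nonpos_of_nonneg_of_nonpos (exp_pos _).le (by linarith)
  have hlim : Tendsto (fun x => c * gaussStopLoss (x / c) - 2 * √(2 * π) * gaussTail x) atTop
      (𝓝 0) := by
    simpa using ((tendsto_gaussStopLoss_atTop.comp (tendsto_id.atTop_div_const hc0)).const_mul
      c).sub (tendsto_gaussTail_atTop.const_mul (2 * √(2 * π)))
  linarith [nonneg_of_hasDerivAt_of_tendsto_atTop hD hlim (by linarith) hsign ht]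

lemma integrable_exp_neg_sq_div_two : Integrable fun t : ℝ => exp (-t ^ 2 / 2) := by
  simpa only [sqrt_two_pi_mul_stdNormalPDF] using integrable_stdNormalPDF.const_mul √(2 * π)

lemma integrableOn_min_one_two_mul_exp (s : Set ℝ) :
    IntegrableOn (fun t : ℝ => min 1 (2 * exp (-t ^ 2 / 2))) s :=
  ((integrable_exp_neg_sq_div_two.const_mul 2).mono (by fun_prop) (.of_forall fun t => by
    have : 0 < 2 * exp (-t ^ 2 / 2) := by positivity
    rw [norm_of_nonneg (le_min zero_le_one this.le), norm_of_nonneg this.le]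
    exact min_le_right _ _)).integrableOn

/-- `min 1 (2 e^{-t²/2})` switches branches at `t₀ = √(2 log 2)`, where `e^{-t₀²/2} = 1/2`. -/
lemma setIntegral_Ioi_min_one_two_mul_exp :
    ∫ t in Ioi 0, min 1 (2 * exp (-t ^ 2 / 2)) = 2 * Bconst := by
  set t₀ := √(2 * log 2)
  have ht₀ : 0 < t₀ := sqrt_pos.2 (by positivity)
  have hsq : t₀ ^ 2 = 2 * log 2 := sq_sqrt (by positivity)
  have hexp : ∀ t, 2 * exp (-t ^ 2 / 2) = exp ((t₀ ^ 2 - t ^ 2) / 2) := fun t => by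
    rw [hsq, sub_div, exp_sub, show 2 * log 2 / 2 = log 2 by ring, exp_log two_pos, neg_div,
      exp_neg]
    ring
  rw [← Ioc_union_Ioi_eq_Ioi ht₀.le, setIntegral_union (Ioc_disjoint_Ioi le_rfl) measurableSet_Ioi
    (integrableOn_min_one_two_mul_exp _) (integrableOn_min_one_two_mul_exp _),
    setIntegral_congr_fun measurableSet_Ioc fun t ht => min_eq_left (by
      rw [hexp]; exact one_le_exp (div_nonneg (by nlinarith [ht.1, ht.2]) two_pos.le)),
    setIntegral_congr_fun measurableSet_Ioi fun t ht => min_eq_right (by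
      rw [hexp]; exact exp_le_one_iff.2 (div_nonpos_of_nonpos_of_nonneg
        (by nlinarith [mem_Ioi.1 ht]) two_pos.le)),
    setIntegral_const, Real.volume_real_Ioc_of_le ht₀.le, integral_const_mul, Bconst]
  simp only [sub_zero, smul_eq_mul, mul_one]
  ring

lemma four_fifths_le_Bconst : 4 / 5 ≤ Bconst := by
  set t₀ := √(2 * log 2)
  have hsq : t₀ ^ 2 = 2 * log 2 := sq_sqrt (by positivity)
  have ht₀ : 1.17 ≤ t₀ := le_sqrt_of_sq_le (by nlinarith [log_two_gt_d9])
  have hφ : √(2 * π) * stdNormalPDF t₀ = 1 / 2 := by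
    rw [sqrt_two_pi_mul_stdNormalPDF, hsq, show -(2 * log 2) / 2 = -log 2 by ring, exp_neg,
      exp_log two_pos, one_div]
  have hmills : t₀ / (2 * (t₀ ^ 2 + 1)) ≤ √(2 * π) * gaussTail t₀ := by
    calc t₀ / (2 * (t₀ ^ 2 + 1)) = √(2 * π) * (t₀ * stdNormalPDF t₀ / (t₀ ^ 2 + 1)) := by
          rw [mul_div_assoc', mul_left_comm, hφ]; field_simp
      _ ≤ _ := mul_le_mul_of_nonneg_left (mul_stdNormalPDF_div_le_gaussTail t₀) (by positivity)
  have hmills' : 0.245 ≤ t₀ / (2 * (t₀ ^ 2 + 1)) := by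
    rw [le_div_iff₀ (by positivity), hsq]
    nlinarith [log_two_lt_d9]
  rw [Bconst, setIntegral_Ioi_exp_neg_sq_div_two]
  linarith

lemma stdNormalPDF_le (x : ℝ) : stdNormalPDF x ≤ 2 / 5 := by
  have hπ : 5 / 2 ≤ √(2 * π) := le_sqrt_of_sq_le (by nlinarith [pi_gt_d2])
  have hexp : exp (-x ^ 2 / 2) ≤ 1 := exp_le_one_iff.2 (by nlinarith [sq_nonneg x])
  rw [stdNormalPDF]
  calc (√(2 * π))⁻¹ * exp (-x ^ 2 / 2) ≤ (√(2 * π))⁻¹ := by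
        apply mul_le_of_le_one_right (by positivity) hexp
    _ ≤ 2 / 5 := by rw [inv_le_comm₀ (by positivity) (by norm_num)]; linarith

lemma two_le_Bconst_div_stdNormalPDF (z : ℝ) : 2 ≤ Bconst / stdNormalPDF z := by
  rw [le_div_iff₀ (stdNormalPDF_pos z)]
  linarith [stdNormalPDF_le z, four_fifths_le_Bconst]

lemma four_thirds_le_sq_of_sqrt_lt {a : ℝ} (ha : √(2 * log 2) < a) : 4 / 3 ≤ a ^ 2 := by
  have h := sq_lt_sq' (by linarith [sqrt_nonneg (2 * log 2)]) ha
  rw [sq_sqrt (by positivity)] at h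
  linarith [log_two_gt_d9]

/-! ### Stop-loss transform of a sub-Gaussian variable -/

section StopLoss

variable {Ω : Type*} [MeasurableSpace Ω] {μ : Measure Ω} {X : Ω → ℝ}

lemma integrable_max_sub_const [IsFiniteMeasure μ] (hX : Integrable X μ) (t : ℝ) :
    Integrable (fun ω => max (X ω - t) 0) μ :=
  (hX.sub (integrable_const t)).sup (integrable_const 0)

lemma convexOn_stopLoss [IsFiniteMeasure μ] (hX : Integrable X μ) :
    ConvexOn ℝ univ (stopLoss μ X) := by
  refine ⟨convex_univ, fun u _ v _ a b ha hb hab => ?_⟩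
  simp only [stopLoss, smul_eq_mul]
  rw [← integral_const_mul, ← integral_const_mul, ← integral_add
    ((integrable_max_sub_const hX u).const_mul a) ((integrable_max_sub_const hX v).const_mul b)]
  refine integral_mono (integrable_max_sub_const hX _)
    (((integrable_max_sub_const hX u).const_mul a).add
      ((integrable_max_sub_const hX v).const_mul b)) fun ω => max_le ?_ (by positivity)
  have hsplit : X ω - (a * u + b * v) = a * (X ω - u) + b * (X ω - v) := by
    linear_combination (-X ω) * hab
  rw [hsplit]
  gcongr <;> exact le_max_left _ _

lemma stopLoss_eq_setIntegral [IsFiniteMeasure μ] (hX : Integrable X μ) (t : ℝ) :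
    stopLoss μ X t = ∫ s in Ioi t, μ.real {ω | s < X ω} := by
  rw [stopLoss, (integrable_max_sub_const hX t).integral_eq_integral_meas_lt
    (.of_forall fun ω => le_max_right _ _),
    ← (measurePreserving_add_left volume t).setIntegral_preimage_emb
      (measurableEmbedding_addLeft t) _ (Ioi t)]
  simp only [preimage_const_add_Ioi, sub_self]
  refine setIntegral_congr_fun measurableSet_Ioi fun s hs => ?_
  congr 1
  ext ω
  simp only [mem_ofPred_eq, lt_max_iff]
  exact ⟨fun h => h.elim (fun h' => by linarith) fun h' => absurd h' (not_lt.2 (le_of_lt hs)),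
    fun h => .inl (by linarith)⟩

lemma stopLoss_eq_neg_add [IsProbabilityMeasure μ] (hX : Integrable X μ)
    (hmean : ∫ ω, X ω ∂μ = 0) (t : ℝ) :
    stopLoss μ X t = -t + stopLoss μ (fun ω => -X ω) (-t) := by
  have h : ∀ x, max (x - t) 0 = (x - t) + max (-x - -t) 0 := fun x => by
    rcases le_total x t with h | h
    · rw [max_eq_right (by linarith), max_eq_left (by linarith)]; ring
    · rw [max_eq_left (by linarith), max_eq_right (by linarith)]; ring
  have h1 : Integrable (fun ω => X ω - t) μ := hX.sub (integrable_const t)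
  have h2 : Integrable (fun ω => max (-X ω - -t) 0) μ := integrable_max_sub_const hX.neg _
  simp only [stopLoss]
  simp_rw [h]
  rw [integral_add h1 h2, integral_sub hX (integrable_const t), hmean]
  simp

variable (htail : ∀ t : ℝ, 0 ≤ t →
    μ {ω | t < |X ω|} ≤ ENNReal.ofReal (min 1 (2 * Real.exp (-t ^ 2 / 2))))
include htail

lemma measureReal_lt_abs_le {s : ℝ} (hs : 0 ≤ s) :
    μ.real {ω | s < |X ω|} ≤ min 1 (2 * exp (-s ^ 2 / 2)) :=
  ENNReal.toReal_le_of_le_ofReal (by positivity) (htail s hs)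

variable [IsProbabilityMeasure μ]

lemma stopLoss_le_two_mul_gaussTail (hX : Integrable X μ) {t : ℝ} (ht : 0 ≤ t) :
    stopLoss μ X t ≤ 2 * √(2 * π) * gaussTail t := by
  rw [stopLoss_eq_setIntegral hX, mul_assoc, ← setIntegral_Ioi_exp_neg_sq_div_two,
    ← integral_const_mul]
  refine integral_mono_of_nonneg (.of_forall fun _ => measureReal_nonneg)
    (integrable_exp_neg_sq_div_two.const_mul 2).integrableOn
    ((ae_restrict_iff' measurableSet_Ioi).2 (.of_forall fun s hs => ?_))
  calc μ.real {ω | s < X ω} ≤ μ.real {ω | s < |X ω|} :=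
        measureReal_mono fun ω (h : s < X ω) => show s < |X ω| from h.trans_le (le_abs_self _)
    _ ≤ min 1 (2 * exp (-s ^ 2 / 2)) := measureReal_lt_abs_le htail (ht.trans (le_of_lt hs))
    _ ≤ 2 * exp (-s ^ 2 / 2) := min_le_right _ _

lemma stopLoss_zero_le_Bconst (hX : Integrable X μ) (hmean : ∫ ω, X ω ∂μ = 0) :
    stopLoss μ X 0 ≤ Bconst := by
  have habs : ∫ ω, |X ω| ∂μ ≤ 2 * Bconst := by
    have h := stopLoss_eq_setIntegral hX.abs 0
    have hmax : ∀ x : ℝ, max (|x| - 0) 0 = |x| := fun x => by simp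
    simp only [stopLoss, hmax] at h
    rw [h, ← setIntegral_Ioi_min_one_two_mul_exp]
    exact integral_mono_of_nonneg (.of_forall fun _ => measureReal_nonneg)
      (integrableOn_min_one_two_mul_exp _)
      ((ae_restrict_iff' measurableSet_Ioi).2 (.of_forall fun s hs =>
        measureReal_lt_abs_le htail (le_of_lt hs)))
  have h : ∀ x : ℝ, max (x - 0) 0 = (|x| + x) / 2 := fun x => by
    rcases le_total x 0 with h | h
    · rw [max_eq_right (by linarith), abs_of_nonpos h]; ring
    · rw [max_eq_left (by linarith), abs_of_nonneg h]; ring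
  simp only [stopLoss, h]
  rw [integral_div, integral_add hX.abs hX, hmean]
  linarith

lemma stopLoss_le_gaussStopLoss_of_nonneg (hX : Integrable X μ) (hmean : ∫ ω, X ω ∂μ = 0)
    {a c p : ℝ} (ha0 : 0 < a) (ha : 4 / 3 ≤ a ^ 2) (hc : 2 ≤ c)
    (hH : a * p + 2 * √(2 * π) * gaussTail a = Bconst)
    (hline : ∀ t, Bconst - p * t ≤ c * gaussStopLoss (t / c)) {t : ℝ} (ht : 0 ≤ t) :
    stopLoss μ X t ≤ c * gaussStopLoss (t / c) := by
  have hπa : stopLoss μ X a ≤ Bconst - p * a := by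
    linarith [stopLoss_le_two_mul_gaussTail htail hX ha0.le]
  rcases le_total t a with hta | hat
  · refine le_trans ?_ (hline t)
    have hw : 0 ≤ 1 - t / a := by rw [sub_nonneg, div_le_one ha0]; exact hta
    have h := (convexOn_stopLoss hX).2 (mem_univ 0) (mem_univ a) hw
      (div_nonneg ht ha0.le) (sub_add_cancel 1 (t / a))
    have hπ0 := stopLoss_zero_le_Bconst htail hX hmean
    simp only [smul_eq_mul, mul_zero, zero_add, div_mul_cancel₀ _ ha0.ne'] at h
    calc stopLoss μ X t ≤ (1 - t / a) * stopLoss μ X 0 + t / a * stopLoss μ X a := h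
      _ ≤ (1 - t / a) * Bconst + t / a * (Bconst - p * a) := by gcongr
      _ = Bconst - p * t := by field_simp; ring
  · exact (stopLoss_le_two_mul_gaussTail htail hX (ha0.le.trans hat)).trans
      (two_mul_gaussTail_le_gaussStopLoss hc ha0 ha (by linarith [hline a]) hat)

end StopLoss

lemma integral_comp_neg_gaussianReal (g : ℝ → ℝ) (v : NNReal) :
    ∫ x, g (-x) ∂gaussianReal 0 v = ∫ x, g x ∂gaussianReal 0 v := by
  conv_rhs => rw [← neg_zero, ← gaussianReal_map_neg]
  exact ((Homeomorph.neg ℝ).measurableEmbedding.integral_map g).symm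

lemma integrable_const_mul_gaussianReal (c : ℝ) :
    Integrable (fun x => c * x) (gaussianReal 0 1) :=
  ((memLp_id_gaussianReal 1).integrable le_rfl).const_mul c

lemma integral_const_mul_gaussianReal (c : ℝ) : ∫ x, c * x ∂gaussianReal 0 1 = 0 := by
  rw [integral_const_mul, integral_id_gaussianReal, mul_zero]

lemma stopLoss_le_stopLoss_gaussianReal {Ω : Type*} [MeasurableSpace Ω] {μ : Measure Ω}
    [IsProbabilityMeasure μ] {X : Ω → ℝ} (hX : Integrable X μ) (hmean : ∫ ω, X ω ∂μ = 0)
    (htail : ∀ t : ℝ, 0 ≤ t →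
      μ {ω | t < |X ω|} ≤ ENNReal.ofReal (min 1 (2 * Real.exp (-t ^ 2 / 2))))
    {a c p : ℝ} (ha0 : 0 < a) (ha : 4 / 3 ≤ a ^ 2) (hc : 2 ≤ c)
    (hH : a * p + 2 * √(2 * π) * gaussTail a = Bconst)
    (hline : ∀ t, Bconst - p * t ≤ c * gaussStopLoss (t / c)) (t : ℝ) :
    stopLoss μ X t ≤ stopLoss (gaussianReal 0 1) (fun x => c * x) t := by
  have hG : ∀ s, stopLoss (gaussianReal 0 1) (fun x => c * x) s = c * gaussStopLoss (s / c) :=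
    integral_max_mul_sub_gaussianReal (by linarith)
  rcases le_total 0 t with ht | ht
  · rw [hG]
    exact stopLoss_le_gaussStopLoss_of_nonneg htail hX hmean ha0 ha hc hH hline ht
  · have hsymm : stopLoss (gaussianReal 0 1) (fun x => -(c * x)) (-t) =
        stopLoss (gaussianReal 0 1) (fun x => c * x) (-t) := by
      simp only [stopLoss, ← mul_neg]
      exact integral_comp_neg_gaussianReal (fun x => max (c * x - -t) 0) 1
    rw [stopLoss_eq_neg_add hX hmean, stopLoss_eq_neg_add (integrable_const_mul_gaussianReal c)
      (integral_const_mul_gaussianReal c), hsymm, hG]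
    have hXneg : Integrable (fun ω => -X ω) μ := hX.neg
    have hmean' : ∫ ω, -X ω ∂μ = 0 := by rw [integral_neg, hmean, neg_zero]
    gcongr
    exact stopLoss_le_gaussStopLoss_of_nonneg (fun s hs => by simpa only [abs_neg] using htail s hs)
      hXneg hmean' ha0 ha hc hH hline (by linarith)

/-- Sharp one-dimensional convex sub-Gaussian comparison: if `X` is integrable, centered,
with two-sided sub-Gaussian tail `P(|X| > t) ≤ min{1, 2e^{-t²/2}}`, then for every convex
`f : ℝ → ℝ` such that `E[f(c₀ G)]` is finite, `E[f(X)] ≤ E[f(c₀ G)]`, where `G` is standard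
normal and `c₀ = B/φ(z)` with `H(a) = B`, `a > √(2 log 2)`, `p₀ = 2e^{-a²/2}`, `Φ̄(z) = p₀`. -/
theorem stmt0
    {Ω : Type*} [MeasurableSpace Ω] (μ : Measure Ω) [IsProbabilityMeasure μ]
    (X : Ω → ℝ) (hXint : Integrable X μ) (hmean : ∫ ω, X ω ∂μ = 0)
    (htail : ∀ t : ℝ, 0 ≤ t →
      μ {ω | t < |X ω|} ≤ ENNReal.ofReal (min 1 (2 * Real.exp (-t ^ 2 / 2))))
    (a z c₀ : ℝ)
    (ha : Real.sqrt (2 * Real.log 2) < a) (hHa : Hfun a = Bconst)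
    (hz : gaussTail z = 2 * Real.exp (-a ^ 2 / 2))
    (hc₀ : c₀ = Bconst / stdNormalPDF z)
    (f : ℝ → ℝ) (hf : ConvexOn ℝ Set.univ f)
    (hfG : Integrable (fun x => f (c₀ * x)) (gaussianReal 0 1)) :
    ∫ ω, f (X ω) ∂μ ≤ ∫ x, f (c₀ * x) ∂(gaussianReal 0 1) := by
  have hc₀' : 2 ≤ c₀ := hc₀ ▸ two_le_Bconst_div_stdNormalPDF z
  have hH : a * (2 * exp (-a ^ 2 / 2)) + 2 * √(2 * π) * gaussTail a = Bconst := by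
    rw [← hHa, Hfun, setIntegral_Ioi_exp_neg_sq_div_two]
    ring
  have hline : ∀ t, Bconst - 2 * exp (-a ^ 2 / 2) * t ≤ c₀ * gaussStopLoss (t / c₀) := fun t => by
    have hcB : c₀ * stdNormalPDF z = Bconst := by
      rw [hc₀, div_mul_cancel₀ _ (stdNormalPDF_pos z).ne']
    simpa only [hcB, hz, mul_comm t] using
      mul_stdNormalPDF_sub_le_mul_gaussStopLoss (by linarith : 0 < c₀) z t
  exact hf.integral_comp_le_of_stopLoss_le hXint (integrable_const_mul_gaussianReal c₀)
    (by rw [hmean, integral_const_mul_gaussianReal])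
    (stopLoss_le_stopLoss_gaussianReal hXint hmean htail ((sqrt_nonneg _).trans_lt ha)
      (four_thirds_le_sq_of_sqrt_lt ha) hc₀' hH hline) hfG
end

section
/- Let X and Y be integrable real random variables. Then X is dominated by Y in the convex order (i.e., E[f(X)] ≤ E[f(Y)] for every convex f : ℝ → ℝ for which both expectations are finite) if and only if E[X] = E[Y] and E[(X − u)₊] ≤ E[(Y − u)₊] for all u ∈ ℝ. -/
open MeasureTheory Set

/-!
Necessity: test the convex order against `±id` and the hinges `x ↦ (x - u)₊`.

Sufficiency: a convex `f` lies above each of its support lines `f u + f'₊(u) (x - u)`, and the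
slopes `f'₊` increase. The upper envelope of the support lines at finitely many increasing points
is the first line plus a nonnegative combination of hinges `(x - w)₊`, placed where consecutive
lines cross; equal means and the stop-loss inequalities therefore compare its expectations. On
grids of mesh `1 / (n + 1)` covering `[-(n + 1), n + 1]` these envelopes converge pointwise to `f`
while staying between the support line at `0` and `f`, so dominated convergence carries the
inequality over to `f`.
-/

open Filter Topology Finset

theorem ConvexOn.add_rightDeriv_mul_sub_le {f : ℝ → ℝ} (hf : ConvexOn ℝ univ f)
    (u x : ℝ) :
    f u + derivWithin f (Ioi u) u * (x - u) ≤ f x := by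
  have hu : u ∈ interior univ := by simp
  rcases lt_trichotomy x u with hxu | rfl | hux
  · have hslope := (hf.slope_le_leftDeriv_of_mem_interior (mem_univ x) hu hxu).trans
      (hf.leftDeriv_le_rightDeriv_of_mem_interior hu)
    rw [slope_def_field, div_le_iff₀ (sub_pos.2 hxu)] at hslope
    linarith
  · simp
  · have hslope := hf.rightDeriv_le_slope_of_mem_interior hu (mem_univ x) hux
    rw [slope_def_field, le_div_iff₀ (sub_pos.2 hux)] at hslope
    linarith

section SupportLines

variable {f c : ℝ → ℝ}

noncomputable def supportLine (f c : ℝ → ℝ) (u x : ℝ) : ℝ := f u + c u * (x - u)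

/-- The abscissa where the support lines at `a` and `b` meet (junk `0` when `c a = c b`). -/
noncomputable def supportCross (f c : ℝ → ℝ) (a b : ℝ) : ℝ :=
  (f b - f a + c a * a - c b * b) / (c a - c b)

noncomputable def supportEnvelope (f c : ℝ → ℝ) (p : ℕ → ℝ) (n : ℕ) (x : ℝ) : ℝ :=
  (range (n + 1)).sup' nonempty_range_add_one fun k => supportLine f c (p k) x

theorem supportLine_sub_supportLine {a b : ℝ} (h : c a ≠ c b) (x : ℝ) :
    supportLine f c b x - supportLine f c a x = (c b - c a) * (x - supportCross f c a b) := by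
  have : c a - c b ≠ 0 := sub_ne_zero.2 h
  simp only [supportLine, supportCross]
  field_simp
  ring

theorem supportEnvelope_le (hc : ∀ u x, supportLine f c u x ≤ f x) (p : ℕ → ℝ) (n : ℕ)
    (x : ℝ) :
    supportEnvelope f c p n x ≤ f x :=
  sup'_le _ _ fun k _ => hc (p k) x

theorem supportLine_le_supportEnvelope (p : ℕ → ℝ) {j n : ℕ} (hjn : j ≤ n) (x : ℝ) :
    supportLine f c (p j) x ≤ supportEnvelope f c p n x :=
  le_sup' (fun k => supportLine f c (p k) x) (mem_range_succ_iff.2 hjn)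

variable (hc : ∀ u x, supportLine f c u x ≤ f x)
include hc

theorem monotone_of_supportLine_le : Monotone c := by
  intro u v huv
  rcases huv.eq_or_lt with rfl | huv
  · rfl
  have hu := hc u v
  have hv := hc v u
  simp only [supportLine] at hu hv
  nlinarith

theorem supportLine_le_supportLine {u v x : ℝ} (huv : u ≤ v) (hvx : v ≤ x) :
    supportLine f c u x ≤ supportLine f c v x := by
  have hslope : 0 ≤ (c v - c u) * (x - v) :=
    mul_nonneg (sub_nonneg.2 (monotone_of_supportLine_le hc huv)) (sub_nonneg.2 hvx)
  have hu := hc u v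
  simp only [supportLine] at hu ⊢
  linarith

theorem supportLine_eq_of_slope_eq {a b : ℝ} (h : c a = c b) (x : ℝ) :
    supportLine f c b x = supportLine f c a x := by
  have ha := hc a b
  have hb := hc b a
  simp only [supportLine] at ha hb ⊢
  rw [← h] at hb ⊢
  linarith

theorem le_supportCross {a b : ℝ} (h : c a < c b) : a ≤ supportCross f c a b := by
  have hba := hc b a
  have hdiff := supportLine_sub_supportLine (f := f) h.ne a
  have haa : supportLine f c a a = f a := by simp [supportLine]
  have : (c b - c a) * (a - supportCross f c a b) ≤ 0 := by linarith
  exact sub_nonpos.1 (nonpos_of_mul_nonpos_right this (sub_pos.2 h))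

theorem max_supportLine_eq_add {a b x e : ℝ} (hab : c a ≤ c b) (hle : supportLine f c a x ≤ e)
    (heq : a ≤ x → e = supportLine f c a x) :
    max e (supportLine f c b x) = e + (c b - c a) * max (x - supportCross f c a b) 0 := by
  rcases hab.eq_or_lt with hab | hab
  · rw [supportLine_eq_of_slope_eq hc hab, hab, sub_self, zero_mul, add_zero, max_eq_left hle]
  have hdiff := supportLine_sub_supportLine (f := f) hab.ne x
  rcases le_total x (supportCross f c a b) with hx | hx
  · have : (c b - c a) * (x - supportCross f c a b) ≤ 0 :=
      mul_nonpos_of_nonneg_of_nonpos (sub_nonneg.2 hab.le) (sub_nonpos.2 hx)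
    rw [max_eq_right (sub_nonpos.2 hx), mul_zero, add_zero, max_eq_left (by linarith)]
  · rw [heq ((le_supportCross hc hab).trans hx), max_eq_left (sub_nonneg.2 hx),
      max_eq_right (by nlinarith)]
    linarith

theorem supportEnvelope_eq_add_sum {p : ℕ → ℝ} (hp : Monotone p) (n : ℕ) (x : ℝ) :
    supportEnvelope f c p n x = supportLine f c (p 0) x +
      ∑ k ∈ range n,
        (c (p (k + 1)) - c (p k)) * max (x - supportCross f c (p k) (p (k + 1))) 0 := by
  induction n with
  | zero => simp [supportEnvelope]
  | succ n ih =>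
    have hstep : supportEnvelope f c p (n + 1) x =
        max (supportEnvelope f c p n x) (supportLine f c (p (n + 1)) x) := by
      simp only [supportEnvelope, range_add_one (n := n + 1), sup'_insert nonempty_range_add_one]
      exact sup_comm _ _
    rw [hstep, sum_range_succ, ← add_assoc, ← ih]
    refine max_supportLine_eq_add hc (monotone_of_supportLine_le hc (hp n.le_succ))
      (supportLine_le_supportEnvelope p le_rfl x) fun hx => ?_
    exact le_antisymm (sup'_le _ _ fun k hk => supportLine_le_supportLine hc
      (hp (mem_range_succ_iff.1 hk)) hx) (supportLine_le_supportEnvelope p le_rfl x)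

end SupportLines

noncomputable def uniformGrid (n i : ℕ) : ℝ := i / (n + 1) - (n + 1)

theorem monotone_uniformGrid (n : ℕ) : Monotone (uniformGrid n) := by
  intro i j hij
  unfold uniformGrid
  gcongr

theorem uniformGrid_sq (n : ℕ) : uniformGrid n ((n + 1) ^ 2) = 0 := by
  unfold uniformGrid
  push_cast
  field_simp
  ring

theorem eventually_exists_uniformGrid_mem_Icc (x : ℝ) :
    ∀ᶠ n : ℕ in atTop, ∃ i ≤ 2 * (n + 1) ^ 2,
      uniformGrid n i ∈ Icc (x - 1 / ((n : ℝ) + 1)) x := by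
  filter_upwards [eventually_ge_atTop ⌈|x|⌉₊] with n hn
  set N : ℝ := (n : ℝ) + 1
  have hN : 0 < N := by positivity
  have hxN : |x| ≤ N := (Nat.ceil_le.1 hn).trans (by simp [N])
  obtain ⟨hxN₁, hxN₂⟩ := abs_le.1 hxN
  have hpos : 0 ≤ (x + N) * N := mul_nonneg (by linarith) hN.le
  refine ⟨⌊(x + N) * N⌋₊, ?_, ?_, ?_⟩
  · have : (⌊(x + N) * N⌋₊ : ℝ) ≤ (2 * (n + 1) ^ 2 : ℕ) := by
      push_cast
      nlinarith [Nat.floor_le hpos]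
    exact_mod_cast this
  · have hx : x - 1 / N = ((x + N) * N - 1) / N - N := by field_simp; ring
    rw [uniformGrid, hx]
    gcongr
    linarith [Nat.lt_floor_add_one ((x + N) * N)]
  · rw [uniformGrid, sub_le_iff_le_add, div_le_iff₀ hN]
    nlinarith [Nat.floor_le hpos]

/-- Envelope of the support lines at the points of mesh `1 / (n + 1)` in `[-(n + 1), n + 1]`. -/
noncomputable def gridEnvelope (f c : ℝ → ℝ) (n : ℕ) : ℝ → ℝ :=
  supportEnvelope f c (uniformGrid n) (2 * (n + 1) ^ 2)

section GridEnvelope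

variable {f c : ℝ → ℝ}

theorem supportLine_zero_le_gridEnvelope (n : ℕ) (x : ℝ) :
    supportLine f c 0 x ≤ gridEnvelope f c n x := by
  have h := supportLine_le_supportEnvelope (f := f) (c := c) (uniformGrid n)
    (show (n + 1) ^ 2 ≤ 2 * (n + 1) ^ 2 by omega) x
  rwa [uniformGrid_sq] at h

variable (hc : ∀ u x, supportLine f c u x ≤ f x)
include hc

theorem tendsto_gridEnvelope (x : ℝ) :
    Tendsto (fun n => gridEnvelope f c n x) atTop (𝓝 (f x)) := by
  set K := c x - c (x - 1)
  have hlower :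
      ∀ᶠ n : ℕ in atTop, f x - K * (1 / ((n : ℝ) + 1)) ≤ gridEnvelope f c n x := by
    filter_upwards [eventually_exists_uniformGrid_mem_Icc x] with n ⟨i, hi, hux, hxu⟩
    set u := uniformGrid n i
    have hδ : 1 / ((n : ℝ) + 1) ≤ 1 := by rw [div_le_one (by positivity)]; simp
    have hK : (c x - c u) * (x - u) ≤ K * (1 / ((n : ℝ) + 1)) :=
      mul_le_mul (by linarith [monotone_of_supportLine_le hc (show x - 1 ≤ u by linarith)])
        (by linarith) (sub_nonneg.2 hxu)
        (sub_nonneg.2 (monotone_of_supportLine_le hc (by linarith)))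
    have hline : f x - (c x - c u) * (x - u) ≤ supportLine f c u x := by
      have hxu := hc x u
      simp only [supportLine] at hxu ⊢
      linarith
    have henv : supportLine f c u x ≤ gridEnvelope f c n x :=
      supportLine_le_supportEnvelope (uniformGrid n) hi x
    linarith
  have hlim : Tendsto (fun n : ℕ => f x - K * (1 / ((n : ℝ) + 1))) atTop (𝓝 (f x)) := by
    simpa using tendsto_const_nhds.sub
      ((tendsto_one_div_add_atTop_nhds_zero_nat (𝕜 := ℝ)).const_mul K)
  exact tendsto_of_tendsto_of_tendsto_of_le_of_le' hlim tendsto_const_nhds hlower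
    (Eventually.of_forall fun n => supportEnvelope_le hc _ _ x)

end GridEnvelope

section Integral

variable {Ω : Type*} [MeasurableSpace Ω] {μ : Measure Ω} {f c : ℝ → ℝ} {Z : Ω → ℝ}

theorem integrable_supportLine_comp [IsFiniteMeasure μ] (hZ : Integrable Z μ) (u : ℝ) :
    Integrable (fun ω => supportLine f c u (Z ω)) μ :=
  (integrable_const (f u)).add ((hZ.sub (integrable_const u)).const_mul (c u))

theorem integral_supportLine_comp [IsProbabilityMeasure μ] (hZ : Integrable Z μ) (u : ℝ) :
    ∫ ω, supportLine f c u (Z ω) ∂μ = supportLine f c u (∫ ω, Z ω ∂μ) := by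
  have hshift : Integrable (fun ω => Z ω - u) μ := hZ.sub (integrable_const u)
  simp only [supportLine]
  rw [integral_add (integrable_const _) (hshift.const_mul _), integral_const_mul,
    integral_sub hZ (integrable_const u)]
  simp

variable (hc : ∀ u x, supportLine f c u x ≤ f x) {p : ℕ → ℝ} (hp : Monotone p)
include hc hp

theorem integrable_supportEnvelope_comp [IsFiniteMeasure μ] (hZ : Integrable Z μ) (n : ℕ) :
    Integrable (fun ω => supportEnvelope f c p n (Z ω)) μ := by
  simp_rw [supportEnvelope_eq_add_sum hc hp]
  exact (integrable_supportLine_comp hZ _).add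
    (integrable_finsetSum _ fun k _ => ((hZ.sub (integrable_const _)).pos_part).const_mul _)

theorem integral_supportEnvelope_comp [IsProbabilityMeasure μ] (hZ : Integrable Z μ) (n : ℕ) :
    ∫ ω, supportEnvelope f c p n (Z ω) ∂μ = supportLine f c (p 0) (∫ ω, Z ω ∂μ) +
      ∑ k ∈ range n, (c (p (k + 1)) - c (p k)) *
        ∫ ω, max (Z ω - supportCross f c (p k) (p (k + 1))) 0 ∂μ := by
  have hhinge : ∀ w : ℝ, Integrable (fun ω => max (Z ω - w) 0) μ :=
    fun w => (hZ.sub (integrable_const w)).pos_part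
  simp_rw [supportEnvelope_eq_add_sum hc hp]
  rw [integral_add (integrable_supportLine_comp hZ _)
      (integrable_finsetSum _ fun k _ => (hhinge _).const_mul _),
    integral_supportLine_comp hZ, integral_finsetSum _ fun k _ => (hhinge _).const_mul _]
  simp_rw [integral_const_mul]

theorem integral_supportEnvelope_comp_le [IsProbabilityMeasure μ] {X Y : Ω → ℝ}
    (hX : Integrable X μ) (hY : Integrable Y μ) (hmean : ∫ ω, X ω ∂μ = ∫ ω, Y ω ∂μ)
    (hstop : ∀ u : ℝ, ∫ ω, max (X ω - u) 0 ∂μ ≤ ∫ ω, max (Y ω - u) 0 ∂μ) (n : ℕ) :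
    ∫ ω, supportEnvelope f c p n (X ω) ∂μ ≤
      ∫ ω, supportEnvelope f c p n (Y ω) ∂μ := by
  rw [integral_supportEnvelope_comp hc hp hX, integral_supportEnvelope_comp hc hp hY, hmean]
  gcongr _ + ∑ k ∈ range n, _ * ?_ with k
  · exact sub_nonneg.2 (monotone_of_supportLine_le hc (hp k.le_succ))
  · exact hstop _

end Integral

theorem tendsto_integral_gridEnvelope_comp {Ω : Type*} [MeasurableSpace Ω] {μ : Measure Ω}
    [IsProbabilityMeasure μ] {f c : ℝ → ℝ} (hc : ∀ u x, supportLine f c u x ≤ f x)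
    {Z : Ω → ℝ} (hZ : Integrable Z μ) (hfZ : Integrable (fun ω => f (Z ω)) μ) :
    Tendsto (fun n => ∫ ω, gridEnvelope f c n (Z ω) ∂μ) atTop (𝓝 (∫ ω, f (Z ω) ∂μ)) := by
  refine tendsto_integral_of_dominated_convergence
    (fun ω => |f (Z ω)| + |supportLine f c 0 (Z ω)|)
    (fun n => (integrable_supportEnvelope_comp hc (monotone_uniformGrid n) hZ _).1)
    (hfZ.abs.add (integrable_supportLine_comp hZ 0).abs)
    (fun n => Eventually.of_forall fun ω => ?_)
    (Eventually.of_forall fun ω => tendsto_gridEnvelope hc (Z ω))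
  have hlow := supportLine_zero_le_gridEnvelope (f := f) (c := c) n (Z ω)
  have hup : gridEnvelope f c n (Z ω) ≤ f (Z ω) := supportEnvelope_le hc _ _ _
  rw [Real.norm_eq_abs, abs_le]
  constructor <;> linarith [neg_abs_le (supportLine f c 0 (Z ω)), le_abs_self (f (Z ω)),
    abs_nonneg (f (Z ω)), abs_nonneg (supportLine f c 0 (Z ω))]

/-- Stop-loss characterization of one-dimensional convex order: for integrable real random
variables `X, Y`, one has `X ⪯_cx Y` (i.e. `E[f(X)] ≤ E[f(Y)]` for every convex `f : ℝ → ℝ`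
for which both expectations are finite) if and only if `E[X] = E[Y]` and
`E[(X − u)₊] ≤ E[(Y − u)₊]` for every `u ∈ ℝ`. -/
theorem stmt2
    {Ω : Type*} [MeasurableSpace Ω] (μ : Measure Ω) [IsProbabilityMeasure μ]
    (X Y : Ω → ℝ) (hX : Integrable X μ) (hY : Integrable Y μ) :
    (∀ f : ℝ → ℝ, ConvexOn ℝ Set.univ f →
        Integrable (fun ω => f (X ω)) μ → Integrable (fun ω => f (Y ω)) μ →
        ∫ ω, f (X ω) ∂μ ≤ ∫ ω, f (Y ω) ∂μ) ↔
      ((∫ ω, X ω ∂μ = ∫ ω, Y ω ∂μ) ∧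
        ∀ u : ℝ, ∫ ω, max (X ω - u) 0 ∂μ ≤ ∫ ω, max (Y ω - u) 0 ∂μ) := by
  constructor
  · intro H
    refine ⟨le_antisymm (H id (convexOn_id convex_univ) hX hY) ?_, fun u => ?_⟩
    · have h := H (-id) (concaveOn_id convex_univ).neg hX.neg hY.neg
      simpa [integral_neg] using h
    · exact H _ (((convexOn_id convex_univ).sub (concaveOn_const u convex_univ)).sup
        (convexOn_const 0 convex_univ)) (hX.sub (integrable_const u)).pos_part
        (hY.sub (integrable_const u)).pos_part
  · rintro ⟨hmean, hstop⟩ f hf hfX hfY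
    have hc : ∀ u x, supportLine f (fun u => derivWithin f (Ioi u) u) u x ≤ f x :=
      hf.add_rightDeriv_mul_sub_le
    exact le_of_tendsto_of_tendsto' (tendsto_integral_gridEnvelope_comp hc hX hfX)
      (tendsto_integral_gridEnvelope_comp hc hY hfY) fun n =>
        integral_supportEnvelope_comp_le hc (monotone_uniformGrid n) hX hY hmean hstop _
end

section
/- Let a ∈ ℝ and let D : [a, ∞) → ℝ be differentiable with D(u) → 0 as u → ∞. Suppose D′(u) = w(u)·(1 − R(u)) for all u ≥ a, where w(u) > 0 for all u ≥ a and R : [a, ∞) → ℝ is nondecreasing. If D(a) ≥ 0, then D(u) ≥ 0 for all u ≥ a. -/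
open Set Filter

/-! On `[a, u]` with `R u ≤ 1` the derivative `w (1 - R)` is nonnegative, so `D u ≥ D a ≥ 0`;
if instead `R u ≥ 1`, the derivative is nonpositive on `[u, ∞)`, so `D` decreases from `D u`
to its limit `0`. -/

section MonotoneRatio

variable {a u : ℝ} {D w R : ℝ → ℝ}
  (hD : ∀ x ∈ Ici a, HasDerivWithinAt D (w x * (1 - R x)) (Ici a) x)
  (hw : ∀ x ∈ Ici a, 0 < w x) (hR : MonotoneOn R (Ici a))
include hD hw hR

theorem monotoneOn_Icc_of_le_one (hu : a ≤ u) (hRu : R u ≤ 1) : MonotoneOn D (Icc a u) := by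
  refine monotoneOn_of_hasDerivWithinAt_nonneg (convex_Icc a u) (f' := fun x => w x * (1 - R x))
    (fun x hx => (hD x hx.1).continuousWithinAt.mono Icc_subset_Ici_self)
    ?_ ?_ <;> rw [interior_Icc] <;> intro x hx <;> have hxa : x ∈ Ici a := hx.1.le
  · exact (hD x hxa).mono (Ioo_subset_Icc_self.trans Icc_subset_Ici_self)
  · have hRx : R x ≤ R u := hR hxa hu hx.2.le
    exact mul_nonneg (hw x hxa).le (by linarith)

theorem antitoneOn_Ici_of_one_le (hu : a ≤ u) (hRu : 1 ≤ R u) : AntitoneOn D (Ici u) := by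
  have hsub : Ici u ⊆ Ici a := Ici_subset_Ici.mpr hu
  refine antitoneOn_of_hasDerivWithinAt_nonpos (convex_Ici u) (f' := fun x => w x * (1 - R x))
    (fun x hx => (hD x (hsub hx)).continuousWithinAt.mono hsub)
    ?_ ?_ <;> rw [interior_Ici] <;> intro x hx <;>
    have hxa : x ∈ Ici a := hsub (mem_Ici.mpr hx.le)
  · exact (hD x hxa).mono (Ioi_subset_Ici_self.trans hsub)
  · have hRx : R u ≤ R x := hR (mem_Ici.mpr hu) hxa hx.le
    exact mul_nonpos_of_nonneg_of_nonpos (hw x hxa).le (by linarith)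

end MonotoneRatio

/-- Monotone-ratio principle: let `D` be differentiable on `[a, ∞)` with `D(u) → 0` as
`u → ∞`, and suppose `D′(u) = w(u)(1 − R(u))` on `[a, ∞)` where `w > 0` and `R` is
nondecreasing on `[a, ∞)`. If `D(a) ≥ 0`, then `D(u) ≥ 0` for all `u ≥ a`. -/
theorem stmt3
    (a : ℝ) (D w R : ℝ → ℝ)
    (hD : ∀ u ∈ Set.Ici a, HasDerivWithinAt D (w u * (1 - R u)) (Set.Ici a) u)
    (hlim : Tendsto D atTop (nhds 0))
    (hw : ∀ u ∈ Set.Ici a, 0 < w u)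
    (hR : MonotoneOn R (Set.Ici a))
    (hDa : 0 ≤ D a) :
    ∀ u ∈ Set.Ici a, 0 ≤ D u := by
  intro u hu
  rcases le_total (R u) 1 with hRu | hRu
  · have hmono := monotoneOn_Icc_of_le_one hD hw hR hu hRu
    exact hDa.trans (hmono (left_mem_Icc.mpr hu) (right_mem_Icc.mpr hu) hu)
  · have hanti := antitoneOn_Ici_of_one_le hD hw hR hu hRu
    refine le_of_tendsto hlim ?_
    filter_upwards [eventually_ge_atTop u] with v hv
    exact hanti self_mem_Ici hv hv
end

section
/- Let s : [0, ∞) → [0, 1] be nonincreasing and continuous with A_s = ∫₀^∞ s(t) dt < ∞, set B_s = A_s/2 and H_s(x) = x·s(x) + ∫_x^∞ s(t) dt, and assume there exists a > 0 with H_s(a) = B_s; put p₀ = s(a). Define J_s(u) = B_s − p₀·u for 0 ≤ u ≤ a and J_s(u) = ∫_u^∞ s(t) dt for u ≥ a. If X is an integrable real random variable with E[X] = 0 and P(|X| > t) ≤ s(t) for all t ≥ 0, then E[(X − u)₊] ≤ J_s(u) for every u ≥ 0. -/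
open MeasureTheory Set

/-- Sharp stop-loss envelope under a two-sided tail constraint: let `s : [0,∞) → [0,1]` be
nonincreasing and continuous with `A_s = ∫₀^∞ s(t) dt < ∞`, `B_s = A_s/2`,
`H_s(x) = x s(x) + ∫_x^∞ s(t) dt`, and let `a > 0` satisfy `H_s(a) = B_s`; set `p₀ = s(a)`.
If `X` is integrable with `E[X] = 0` and `P(|X| > t) ≤ s(t)` for all `t ≥ 0`, then for every
`u ≥ 0`, `E[(X − u)₊] ≤ J_s(u)`, where `J_s(u) = B_s − p₀ u` for `0 ≤ u ≤ a` and
`J_s(u) = ∫_u^∞ s(t) dt` for `u ≥ a`. -/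
theorem stmt4
    (s : ℝ → ℝ)
    (hs01 : ∀ t ∈ Set.Ici (0 : ℝ), s t ∈ Set.Icc (0 : ℝ) 1)
    (hmono : AntitoneOn s (Set.Ici 0))
    (hcont : ContinuousOn s (Set.Ici 0))
    (hint : IntegrableOn s (Set.Ioi 0))
    (a : ℝ) (ha : 0 < a)
    (hHa : a * s a + ∫ t in Set.Ioi a, s t = (∫ t in Set.Ioi (0 : ℝ), s t) / 2)
    {Ω : Type*} [MeasurableSpace Ω] (μ : Measure Ω) [IsProbabilityMeasure μ]
    (X : Ω → ℝ) (hXint : Integrable X μ) (hmean : ∫ ω, X ω ∂μ = 0)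
    (htail : ∀ t : ℝ, 0 ≤ t → μ {ω | t < |X ω|} ≤ ENNReal.ofReal (s t)) :
    ∀ u : ℝ, 0 ≤ u →
      ∫ ω, max (X ω - u) 0 ∂μ ≤
        if u ≤ a then (∫ t in Set.Ioi (0 : ℝ), s t) / 2 - s a * u
        else ∫ t in Set.Ioi u, s t := by
  have hs_nn : ∀ t : ℝ, 0 ≤ t → 0 ≤ s t := fun t ht => (hs01 t ht).1
  -- shifted integrability and translation identity
  have hshift : ∀ v : ℝ, 0 ≤ v →
      IntegrableOn (fun t => s (t + v)) (Set.Ioi 0) ∧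
        (∫ t in Set.Ioi v, s t) = ∫ t in Set.Ioi 0, s (t + v) := by
    intro v hv
    have hs_int_v : IntegrableOn s (Set.Ioi v) := hint.mono_set (Ioi_subset_Ioi hv)
    have hpre : (fun x : ℝ => x + v) ⁻¹' (Set.Ioi v) = Set.Ioi 0 := by
      ext x; simp [lt_add_iff_pos_left]
    have hmp : MeasurePreserving (fun x : ℝ => x + v) volume volume :=
      measurePreserving_add_right volume v
    constructor
    · have hind : Integrable ((Set.Ioi v).indicator s) volume :=
        (integrable_indicator_iff measurableSet_Ioi).2 hs_int_v
      have hcomp : Integrable (((Set.Ioi v).indicator s) ∘ fun x => x + v) volume :=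
        (hmp.integrable_comp hind.aestronglyMeasurable).2 hind
      have heq : (((Set.Ioi v).indicator s) ∘ fun x => x + v)
          = (Set.Ioi 0).indicator (fun t => s (t + v)) := by
        ext x
        by_cases hx : x ∈ Set.Ioi (0 : ℝ)
        · have : x + v ∈ Set.Ioi v := by simp at hx ⊢; linarith
          simp [Function.comp, indicator_of_mem this, indicator_of_mem hx]
        · have : x + v ∉ Set.Ioi v := by simp at hx ⊢; linarith
          simp [Function.comp, indicator_of_notMem this, indicator_of_notMem hx]
      rw [heq] at hcomp
      exact (integrable_indicator_iff measurableSet_Ioi).1 hcomp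
    · have heq : ((Set.Ioi v).indicator s) ∘ (fun x : ℝ => x + v)
          = (Set.Ioi 0).indicator (fun t => s (t + v)) := by
        ext x
        by_cases hx : x ∈ Set.Ioi (0 : ℝ)
        · have hx' : x + v ∈ Set.Ioi v := by simp at hx ⊢; linarith
          simp [Function.comp, indicator_of_mem hx', indicator_of_mem hx]
        · have hx' : x + v ∉ Set.Ioi v := by simp at hx ⊢; linarith
          simp [Function.comp, indicator_of_notMem hx', indicator_of_notMem hx]
      calc ∫ t in Set.Ioi v, s t = ∫ t, (Set.Ioi v).indicator s t := by
            rw [integral_indicator measurableSet_Ioi]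
        _ = ∫ t, (Set.Ioi v).indicator s (t + v) :=
            (integral_add_right_eq_self ((Set.Ioi v).indicator s) v).symm
        _ = ∫ t, (Set.Ioi 0).indicator (fun t => s (t + v)) t := by
            have heq' : (fun t : ℝ => (Set.Ioi v).indicator s (t + v))
                = (Set.Ioi 0).indicator (fun t => s (t + v)) :=
              funext fun x => congrFun heq x
            rw [heq']
        _ = ∫ t in Set.Ioi 0, s (t + v) := integral_indicator measurableSet_Ioi
  -- the main tail bound
  have key : ∀ v : ℝ, 0 ≤ v → ∫ ω, max (X ω - v) 0 ∂μ ≤ ∫ t in Set.Ioi v, s t := by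
    intro v hv
    obtain ⟨hsi, htr⟩ := hshift v hv
    have hintv : Integrable (fun ω => max (X ω - v) 0) μ :=
      (hXint.sub (integrable_const v)).pos_part
    rw [hintv.integral_eq_integral_meas_lt (ae_of_all _ fun ω => le_max_right _ _), htr]
    refine integral_mono_of_nonneg (ae_of_all _ fun t => ENNReal.toReal_nonneg) hsi
      ((ae_restrict_iff' measurableSet_Ioi).2 (ae_of_all _ fun t ht => ?_))
    have ht0 : 0 < t := ht
    have hsub : {ω | t < max (X ω - v) 0} ⊆ {ω | t + v < |X ω|} := by
      intro ω hω
      simp only [mem_setOf_eq] at hω ⊢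
      rcases le_or_gt (X ω - v) 0 with h | h
      · rw [max_eq_right h] at hω; linarith
      · rw [max_eq_left h.le] at hω
        have : t + v < X ω := by linarith
        exact lt_of_lt_of_le this (le_abs_self _)
    calc (μ {ω | t < max (X ω - v) 0}).toReal
        ≤ (ENNReal.ofReal (s (t + v))).toReal := by
          refine ENNReal.toReal_mono ENNReal.ofReal_ne_top ?_
          exact le_trans (measure_mono hsub) (htail (t + v) (by linarith))
      _ = s (t + v) := ENNReal.toReal_ofReal (hs_nn _ (by linarith))
  -- bound on E|X|
  have hAbs : ∫ ω, |X ω| ∂μ ≤ ∫ t in Set.Ioi (0 : ℝ), s t := by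
    rw [hXint.abs.integral_eq_integral_meas_lt (ae_of_all _ fun ω => abs_nonneg _)]
    refine integral_mono_of_nonneg (ae_of_all _ fun t => ENNReal.toReal_nonneg) hint
      ((ae_restrict_iff' measurableSet_Ioi).2 (ae_of_all _ fun t ht => ?_))
    have ht0 : 0 < t := ht
    calc (μ {ω | t < |X ω|}).toReal
        ≤ (ENNReal.ofReal (s t)).toReal :=
          ENNReal.toReal_mono ENNReal.ofReal_ne_top (htail t ht0.le)
      _ = s t := ENNReal.toReal_ofReal (hs_nn _ ht0.le)
  -- E[X₊] = E|X|/2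
  have hpos : ∫ ω, max (X ω) 0 ∂μ = (∫ ω, |X ω| ∂μ) / 2 := by
    have heq : (fun ω => max (X ω) 0) = fun ω => (X ω + |X ω|) / 2 := by
      funext ω
      rcases le_total (X ω) 0 with h | h
      · rw [max_eq_right h, abs_of_nonpos h]; ring
      · rw [max_eq_left h, abs_of_nonneg h]; ring
    rw [heq]
    simp_rw [div_eq_mul_inv]
    rw [integral_mul_const, integral_add hXint hXint.abs, hmean, zero_add]
  intro u hu
  split_ifs with hua
  · -- case 0 ≤ u ≤ a : convexity
    set B := (∫ t in Set.Ioi (0 : ℝ), s t) / 2 with hB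
    have hl0 : 0 ≤ u / a := div_nonneg hu ha.le
    have hl1 : u / a ≤ 1 := (div_le_one ha).2 hua
    have hla : u / a * a = u := div_mul_cancel₀ u ha.ne'
    have hpt : ∀ ω, max (X ω - u) 0 ≤
        (1 - u / a) * max (X ω) 0 + (u / a) * max (X ω - a) 0 := by
      intro ω
      have h1 : (0:ℝ) ≤ max (X ω) 0 := le_max_right _ _
      have h2 : (0:ℝ) ≤ max (X ω - a) 0 := le_max_right _ _
      rcases le_or_gt (X ω) u with h | h
      · rw [max_eq_right (by linarith)]
        have := mul_nonneg (by linarith : (0:ℝ) ≤ 1 - u / a) h1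
        have := mul_nonneg hl0 h2
        linarith
      · rw [max_eq_left (by linarith)]
        rcases le_or_gt (X ω) a with h3 | h3
        · rw [max_eq_left (by linarith), max_eq_right (by linarith)]
          have := mul_le_mul_of_nonneg_left h3 hl0
          nlinarith
        · rw [max_eq_left (by linarith), max_eq_left (by linarith)]
          nlinarith
    have hInt1 : Integrable (fun ω => max (X ω) 0) μ := hXint.pos_part
    have hInta : Integrable (fun ω => max (X ω - a) 0) μ :=
      (hXint.sub (integrable_const a)).pos_part
    have step : ∫ ω, max (X ω - u) 0 ∂μ ≤
        ∫ ω, ((1 - u / a) * max (X ω) 0 + (u / a) * max (X ω - a) 0) ∂μ :=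
      integral_mono ((hXint.sub (integrable_const u)).pos_part)
        ((hInt1.const_mul _).add (hInta.const_mul _)) hpt
    rw [integral_add (hInt1.const_mul _) (hInta.const_mul _),
      integral_const_mul, integral_const_mul] at step
    have hI1 : ∫ ω, max (X ω) 0 ∂μ ≤ B := by
      rw [hpos, hB]; linarith
    have hIa : ∫ ω, max (X ω - a) 0 ∂μ ≤ B - a * s a := by
      have := key a ha.le
      linarith [hHa]
    have hsa : 0 ≤ s a := hs_nn a ha.le
    have c1 : (1 - u / a) * (∫ ω, max (X ω) 0 ∂μ) ≤ (1 - u / a) * B :=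
      mul_le_mul_of_nonneg_left hI1 (by linarith)
    have c2 : (u / a) * (∫ ω, max (X ω - a) 0 ∂μ) ≤ (u / a) * (B - a * s a) :=
      mul_le_mul_of_nonneg_left hIa hl0
    have : (1 - u / a) * B + (u / a) * (B - a * s a) = B - s a * u := by
      have : u / a * (a * s a) = u * s a := by rw [← mul_assoc, hla]
      nlinarith [this]
    linarith
  · exact key u hu
end

section
/- Let s : [0, ∞) → [0, 1] be nonincreasing and continuous with A_s = ∫₀^∞ s(t) dt < ∞, set B_s = A_s/2 and H_s(x) = x·s(x) + ∫_x^∞ s(t) dt, assume there exists a > 0 with H_s(a) = B_s, put p₀ = s(a), and define J_s(u) = B_s − p₀·u for 0 ≤ u ≤ a and J_s(u) = ∫_u^∞ s(t) dt for u ≥ a. Then J_s(u) ≥ B_s − p₀·u for all u ≥ 0. -/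
/-!
For `u > a`, monotonicity gives `∫_a^u s ≤ (u - a) s(a)`, so
`∫_u^∞ s ≥ ∫_a^∞ s - (u - a) s(a) = H_s(a) - s(a) u = B_s - p₀ u`.
-/

open MeasureTheory Set

theorem setIntegral_Ioc_le_of_antitoneOn {f : ℝ → ℝ} {a u : ℝ} (hau : a ≤ u)
    (hf : AntitoneOn f (Icc a u)) (hfi : IntegrableOn f (Ioc a u)) :
    ∫ t in Ioc a u, f t ≤ (u - a) * f a := by
  calc ∫ t in Ioc a u, f t ≤ ∫ _ in Ioc a u, f a :=
        setIntegral_mono_on hfi (integrableOn_const measure_Ioc_lt_top.ne) measurableSet_Ioc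
          fun t ht ↦ hf (left_mem_Icc.2 hau) (Ioc_subset_Icc_self ht) ht.1.le
    _ = (u - a) * f a := by
        rw [setIntegral_const, smul_eq_mul, measureReal_def, Real.volume_Ioc,
          ENNReal.toReal_ofReal (sub_nonneg.2 hau)]

theorem setIntegral_Ioi_sub_le_of_antitoneOn {f : ℝ → ℝ} {a u : ℝ} (hau : a ≤ u)
    (hf : AntitoneOn f (Ici a)) (hfi : IntegrableOn f (Ioi a)) :
    (∫ t in Ioi a, f t) - (u - a) * f a ≤ ∫ t in Ioi u, f t := by
  have hsplit : ∫ t in Ioi a, f t = (∫ t in Ioc a u, f t) + ∫ t in Ioi u, f t := by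
    rw [← setIntegral_union (Ioc_disjoint_Ioi le_rfl) measurableSet_Ioi
      (hfi.mono_set Ioc_subset_Ioi_self) (hfi.mono_set (Ioi_subset_Ioi hau)),
      Ioc_union_Ioi_eq_Ioi hau]
  have hbound := setIntegral_Ioc_le_of_antitoneOn hau (hf.mono Icc_subset_Ici_self)
    (hfi.mono_set Ioc_subset_Ioi_self)
  linarith

theorem stmt5_general
    (s : ℝ → ℝ)
    (hmono : AntitoneOn s (Set.Ici 0))
    (hint : IntegrableOn s (Set.Ioi 0))
    (a : ℝ) (ha : 0 < a)
    (hHa : a * s a + ∫ t in Set.Ioi a, s t = (∫ t in Set.Ioi (0 : ℝ), s t) / 2) :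
    ∀ u : ℝ, 0 ≤ u →
      (∫ t in Set.Ioi (0 : ℝ), s t) / 2 - s a * u ≤
        (if u ≤ a then (∫ t in Set.Ioi (0 : ℝ), s t) / 2 - s a * u
         else ∫ t in Set.Ioi u, s t) := by
  intro u _
  split_ifs with hua
  · exact le_rfl
  · have hlower := setIntegral_Ioi_sub_le_of_antitoneOn (not_le.1 hua).le
      (hmono.mono (Ici_subset_Ici.2 ha.le)) (hint.mono_set (Ioi_subset_Ioi ha.le))
    linarith

/-- Global linear lower bound for the stop-loss envelope: in the setting of the sharp
stop-loss envelope construction (`s : [0,∞) → [0,1]` nonincreasing and continuous,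
`A_s = ∫₀^∞ s < ∞`, `B_s = A_s/2`, `H_s(x) = x s(x) + ∫_x^∞ s`, `a > 0` with
`H_s(a) = B_s`, `p₀ = s(a)`), the envelope `J_s(u)` (equal to `B_s − p₀ u` for
`0 ≤ u ≤ a` and to `∫_u^∞ s` for `u ≥ a`) satisfies `J_s(u) ≥ B_s − p₀ u` for all `u ≥ 0`. -/
theorem stmt5
    (s : ℝ → ℝ)
    (hs01 : ∀ t ∈ Set.Ici (0 : ℝ), s t ∈ Set.Icc (0 : ℝ) 1)
    (hmono : AntitoneOn s (Set.Ici 0))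
    (hcont : ContinuousOn s (Set.Ici 0))
    (hint : IntegrableOn s (Set.Ioi 0))
    (a : ℝ) (ha : 0 < a)
    (hHa : a * s a + ∫ t in Set.Ioi a, s t = (∫ t in Set.Ioi (0 : ℝ), s t) / 2) :
    ∀ u : ℝ, 0 ≤ u →
      (∫ t in Set.Ioi (0 : ℝ), s t) / 2 - s a * u ≤
        (if u ≤ a then (∫ t in Set.Ioi (0 : ℝ), s t) / 2 - s a * u
         else ∫ t in Set.Ioi u, s t) :=
  stmt5_general s hmono hint a ha hHa
end

section
/- Let s : [0, ∞) → [0, 1] be nonincreasing and continuous with A_s = ∫₀^∞ s(t) dt < ∞, B_s = A_s/2, H_s(x) = x·s(x) + ∫_x^∞ s(t) dt, and suppose additionally there exists t₀ ≥ 0 with s(t) = 1 for t ∈ [0, t₀] and s strictly decreasing on [t₀, ∞), and that the solution a of H_s(a) = B_s satisfies a > t₀; set p₀ = s(a). Define F⋆(x) = 0 for x ≤ −a, F⋆(x) = s(−x) − p₀ for −a < x ≤ −t₀, F⋆(x) = 1 − p₀ for −t₀ < x < a, and F⋆(x) = 1 − s(x) for x ≥ a. Then F⋆ is a cumulative distribution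 function, and the random variable X⋆ with distribution function F⋆ satisfies: P(|X⋆| > t) = s(t) for all t ≥ 0, E[X⋆] = 0, and E[(X⋆ − u)₊] = J_s(u) for all u ≥ 0, where J_s(u) = B_s − p₀·u for 0 ≤ u ≤ a and J_s(u) = ∫_u^∞ s(t) dt for u ≥ a. -/
/-!
Let `T ≥ 0` be a random variable with `P(T > t) = s t`; its law is the Stieltjes measure of
`x ↦ 1 - s (max x 0)`. Put `X⋆ = -T` on `{T ≤ a}` and `X⋆ = T` on `{T > a}`. Then `|X⋆| = T`,
and for `c, t ≥ 0` one has `P(X⋆ > c) = s (max c a)` and `P(X⋆ < -t) = (s t - s a)₊`, from which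
the distribution function is read off. By the layer-cake formula
`E[(X - u)₊] = ∫_u^∞ P(X > t) dt`, the stop-loss values are `∫_u^∞ s (max t a) dt`, which is
`(a - u) s(a) + ∫_a^∞ s = B_s - p₀ u` for `u ≤ a`; the defining equation `H_s(a) = B_s` says
precisely that `E[X⋆₊] = B_s = A_s - H_s(a) = E[X⋆₋]`, i.e. `E[X⋆] = 0`.
-/

open MeasureTheory Set Filter Topology

theorem setIntegral_Ioi_comp_add_left (f : ℝ → ℝ) (u c : ℝ) :
    ∫ t in Ioi c, f (u + t) = ∫ t in Ioi (u + c), f t := by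
  have hpre : (u + ·) ⁻¹' Ioi (u + c) = Ioi c := by ext; simp
  rw [← hpre]
  exact (measurePreserving_add_left volume u).setIntegral_preimage_emb
    (measurableEmbedding_addLeft u) f _

section LayerCake

variable {ν : Measure ℝ}

theorem integral_max_sub_zero_eq_setIntegral_Ioi [IsFiniteMeasure ν] (hν : Integrable (fun x ↦ x) ν)
    (u : ℝ) :
    ∫ x, max (x - u) 0 ∂ν = ∫ t in Ioi u, ν.real (Ioi t) := by
  have hint : Integrable (fun x ↦ max (x - u) 0) ν := (hν.sub (integrable_const u)).pos_part
  rw [hint.integral_eq_integral_meas_lt (ae_of_all _ fun x ↦ le_max_right _ _),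
    ← add_zero u, ← setIntegral_Ioi_comp_add_left]
  refine setIntegral_congr_fun measurableSet_Ioi fun t (ht : 0 < t) ↦ ?_
  congr 2
  ext x
  simp only [lt_max_iff]
  grind

theorem integral_max_neg_zero_eq_setIntegral_Ioi (hν : Integrable (fun x ↦ x) ν) :
    ∫ x, max (-x) 0 ∂ν = ∫ t in Ioi 0, ν.real (Iio (-t)) := by
  rw [hν.neg_part.integral_eq_integral_meas_lt (ae_of_all _ fun x ↦ le_max_right _ _)]
  refine setIntegral_congr_fun measurableSet_Ioi fun t (ht : 0 < t) ↦ ?_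
  congr 2
  ext x
  simp only [lt_max_iff]
  grind

end LayerCake

theorem integrable_id_of_measure_abs_gt {ν : Measure ℝ} {g : ℝ → ℝ}
    (hg : IntegrableOn g (Ioi 0)) (htail : ∀ t, 0 < t → ν {x | t < |x|} = .ofReal (g t)) :
    Integrable (fun x ↦ x) ν := by
  refine ⟨aestronglyMeasurable_id, ?_⟩
  rw [hasFiniteIntegral_iff_norm, lintegral_eq_lintegral_meas_lt ν (f := fun x ↦ ‖x‖)
    (ae_of_all _ fun x ↦ norm_nonneg _) measurable_norm.aemeasurable]
  simp only [Real.norm_eq_abs]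
  rw [setLIntegral_congr_fun measurableSet_Ioi fun t ht ↦ htail t ht]
  exact hg.lintegral_lt_top

theorem setIntegral_Ioi_eq_Ioc_add_Ioi {f : ℝ → ℝ} {c d : ℝ} (hcd : c ≤ d)
    (h₁ : IntegrableOn f (Ioc c d)) (h₂ : IntegrableOn f (Ioi d)) :
    ∫ t in Ioi c, f t = (∫ t in Ioc c d, f t) + ∫ t in Ioi d, f t := by
  rw [← Ioc_union_Ioi_eq_Ioi hcd, setIntegral_union Ioc_disjoint_Ioi_same measurableSet_Ioi h₁ h₂]

theorem AntitoneOn.tendsto_atTop_zero_of_integrableOn {s : ℝ → ℝ} (hmono : AntitoneOn s (Ici 0))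
    (hnonneg : ∀ t ∈ Ici (0 : ℝ), 0 ≤ s t) (hint : IntegrableOn s (Ioi 0)) :
    Tendsto s atTop (𝓝 0) := by
  have hbound : ∀ x > 0, s x ≤ (∫ t in Ioi 0, s t) / x := by
    intro x hx
    rw [le_div_iff₀ hx]
    calc s x * x = ∫ _ in Ioc 0 x, s x := by
          simp [Real.volume_real_Ioc_of_le hx.le, mul_comm]
      _ ≤ ∫ t in Ioc 0 x, s t :=
          setIntegral_mono_on (integrableOn_const measure_Ioc_lt_top.ne)
            (hint.mono_set Ioc_subset_Ioi_self) measurableSet_Ioc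
            fun t ht ↦ hmono ht.1.le hx.le ht.2
      _ ≤ ∫ t in Ioi 0, s t :=
          setIntegral_mono_set hint
            (ae_restrict_of_forall_mem measurableSet_Ioi fun t ht ↦ hnonneg t (mem_Ici.2 ht.le))
            Ioc_subset_Ioi_self.eventuallyLE
  exact tendsto_of_tendsto_of_tendsto_of_le_of_le' tendsto_const_nhds
    (tendsto_const_nhds.div_atTop tendsto_id)
    (eventually_ge_atTop 0 |>.mono hnonneg) (eventually_gt_atTop 0 |>.mono hbound)

section TailIntegrals

variable {s : ℝ → ℝ} {a : ℝ}

theorem setIntegral_Ioi_comp_max_of_le (hint : IntegrableOn s (Ioi a)) {u : ℝ} (hu : u ≤ a) :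
    ∫ t in Ioi u, s (max t a) = (a - u) * s a + ∫ t in Ioi a, s t := by
  have hlow : EqOn (fun t ↦ s (max t a)) (fun _ ↦ s a) (Ioc u a) :=
    fun t ht ↦ by simp only [max_eq_right ht.2]
  have hhigh : EqOn (fun t ↦ s (max t a)) s (Ioi a) :=
    fun t ht ↦ by simp only [max_eq_left (mem_Ioi.1 ht).le]
  rw [setIntegral_Ioi_eq_Ioc_add_Ioi hu
      ((integrableOn_const measure_Ioc_lt_top.ne).congr_fun hlow.symm measurableSet_Ioc)
      (hint.congr_fun hhigh.symm measurableSet_Ioi)]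
  rw [setIntegral_congr_fun measurableSet_Ioc hlow, setIntegral_congr_fun measurableSet_Ioi hhigh,
    setIntegral_const, Real.volume_real_Ioc_of_le hu, smul_eq_mul]

theorem setIntegral_Ioi_comp_max_of_ge {u : ℝ} (hu : a ≤ u) :
    ∫ t in Ioi u, s (max t a) = ∫ t in Ioi u, s t :=
  setIntegral_congr_fun measurableSet_Ioi fun t ht ↦ by
    simp only [max_eq_left (hu.trans (le_of_lt ht))]

theorem setIntegral_Ioi_max_sub_zero (hmono : AntitoneOn s (Ici 0)) (hint : IntegrableOn s (Ioi 0))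
    (ha : 0 ≤ a) :
    ∫ t in Ioi 0, max (s t - s a) 0 = (∫ t in Ioi 0, s t) - (a * s a + ∫ t in Ioi a, s t) := by
  have hlow : EqOn (fun t ↦ max (s t - s a) 0) (fun t ↦ s t - s a) (Ioc 0 a) := fun t ht ↦
    max_eq_left (sub_nonneg.2 (hmono (mem_Ici.2 ht.1.le) (mem_Ici.2 ha) ht.2))
  have hhigh : EqOn (fun t ↦ max (s t - s a) 0) (fun _ ↦ 0) (Ioi a) := fun t ht ↦
    max_eq_right (sub_nonpos.2 (hmono (mem_Ici.2 ha) (mem_Ici.2 (ha.trans (mem_Ioi.1 ht).le))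
      (mem_Ioi.1 ht).le))
  have hsIoc : IntegrableOn s (Ioc 0 a) := hint.mono_set Ioc_subset_Ioi_self
  have hsplit := setIntegral_Ioi_eq_Ioc_add_Ioi ha hsIoc (hint.mono_set (Ioi_subset_Ioi ha))
  rw [setIntegral_Ioi_eq_Ioc_add_Ioi ha
      ((hsIoc.sub (integrableOn_const measure_Ioc_lt_top.ne)).congr_fun hlow.symm measurableSet_Ioc)
      (integrableOn_zero.congr_fun hhigh.symm measurableSet_Ioi)]
  rw [setIntegral_congr_fun measurableSet_Ioc hlow, setIntegral_congr_fun measurableSet_Ioi hhigh,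
    integral_sub hsIoc (integrableOn_const measure_Ioc_lt_top.ne), setIntegral_const,
    Real.volume_real_Ioc_of_le ha, smul_eq_mul, integral_zero]
  linarith

end TailIntegrals

section Survival

variable {s : ℝ → ℝ} (hmono : AntitoneOn s (Ici 0)) (hcont : ContinuousOn s (Ici 0))

theorem ContinuousOn.comp_max_zero (hcont : ContinuousOn s (Ici 0)) :
    Continuous fun x ↦ s (max x 0) :=
  hcont.comp_continuous (continuous_id.max continuous_const) fun x ↦ le_max_right x 0

noncomputable def survivalCDF : StieltjesFunction ℝ where
  toFun x := 1 - s (max x 0)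
  mono' _ _ hxy := sub_le_sub_left (hmono (mem_Ici.2 (le_max_right _ 0))
    (mem_Ici.2 (le_max_right _ 0)) (max_le_max_right 0 hxy)) 1
  right_continuous' _ := (continuous_const.sub hcont.comp_max_zero).continuousWithinAt

theorem survivalCDF_apply (x : ℝ) : survivalCDF hmono hcont x = 1 - s (max x 0) := rfl

theorem continuous_survivalCDF : Continuous (survivalCDF hmono hcont) :=
  continuous_const.sub hcont.comp_max_zero

theorem survivalCDF_of_nonpos (hs0 : s 0 = 1) {x : ℝ} (hx : x ≤ 0) :
    survivalCDF hmono hcont x = 0 := by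
  rw [survivalCDF_apply, max_eq_right hx, hs0, sub_self]

theorem survivalCDF_of_nonneg {x : ℝ} (hx : 0 ≤ x) :
    survivalCDF hmono hcont x = 1 - s x := by
  rw [survivalCDF_apply, max_eq_left hx]

theorem tendsto_survivalCDF_atBot (hs0 : s 0 = 1) :
    Tendsto (survivalCDF hmono hcont) atBot (𝓝 0) :=
  tendsto_const_nhds.congr' <| (eventually_le_atBot 0).mono fun _ hx ↦
    (survivalCDF_of_nonpos hmono hcont hs0 hx).symm

theorem tendsto_survivalCDF_atTop (hlim : Tendsto s atTop (𝓝 0)) :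
    Tendsto (survivalCDF hmono hcont) atTop (𝓝 1) := by
  simpa using (tendsto_const_nhds.sub hlim).congr' <| (eventually_ge_atTop 0).mono fun _ hx ↦
    (survivalCDF_of_nonneg hmono hcont hx).symm

theorem measure_survivalCDF_Icc (c d : ℝ) :
    (survivalCDF hmono hcont).measure (Icc c d) =
      ENNReal.ofReal (survivalCDF hmono hcont d - survivalCDF hmono hcont c) := by
  rw [StieltjesFunction.measure_Icc,
    ((continuous_survivalCDF hmono hcont).continuousWithinAt).leftLim_eq]

theorem measure_survivalCDF_Iio_of_nonpos (hs0 : s 0 = 1) {c : ℝ} (hc : c ≤ 0) :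
    (survivalCDF hmono hcont).measure (Iio c) = 0 := by
  refine measure_mono_null Iio_subset_Iic_self ?_
  rw [StieltjesFunction.measure_Iic _ (tendsto_survivalCDF_atBot hmono hcont hs0),
    survivalCDF_of_nonpos hmono hcont hs0 hc, sub_zero, ENNReal.ofReal_zero]

theorem measure_survivalCDF_Ioi (hlim : Tendsto s atTop (𝓝 0)) {c : ℝ} (hc : 0 ≤ c) :
    (survivalCDF hmono hcont).measure (Ioi c) = ENNReal.ofReal (s c) := by
  rw [StieltjesFunction.measure_Ioi _ (tendsto_survivalCDF_atTop hmono hcont hlim),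
    survivalCDF_of_nonneg hmono hcont hc, sub_sub_cancel]

theorem measure_survivalCDF_Iio_union_Ioi (hs0 : s 0 = 1) (hlim : Tendsto s atTop (𝓝 0))
    {c d : ℝ} (hc : c ≤ 0) (hd : 0 ≤ d) :
    (survivalCDF hmono hcont).measure (Iio c ∪ Ioi d) = ENNReal.ofReal (s d) := by
  rw [← measure_survivalCDF_Ioi hmono hcont hlim hd]
  refine le_antisymm ((measure_union_le _ _).trans ?_) (measure_mono subset_union_right)
  rw [measure_survivalCDF_Iio_of_nonpos hmono hcont hs0 hc, zero_add]

end Survival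

noncomputable def flipBelow (a T : ℝ) : ℝ := if T ≤ a then -T else T

section FlipBelow

variable {a : ℝ}

theorem measurable_flipBelow : Measurable (flipBelow a) :=
  Measurable.ite measurableSet_Iic measurable_neg measurable_id

theorem abs_flipBelow (T : ℝ) : |flipBelow a T| = |T| := by
  unfold flipBelow; split_ifs <;> simp

theorem flipBelow_preimage_Iic (ha : 0 ≤ a) (x : ℝ) :
    flipBelow a ⁻¹' Iic x = Icc (-x) (max a x) := by
  ext T
  simp only [flipBelow, mem_preimage, mem_Iic, mem_Icc, le_max_iff]
  split_ifs <;> grind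

theorem flipBelow_preimage_Ioi (ha : 0 ≤ a) {c : ℝ} (hc : 0 ≤ c) :
    flipBelow a ⁻¹' Ioi c = Iio (-c) ∪ Ioi (max c a) := by
  ext T
  simp only [flipBelow, mem_preimage, mem_Ioi, mem_union, mem_Iio, max_lt_iff]
  split_ifs <;> grind

theorem flipBelow_preimage_Iio_neg (ha : 0 ≤ a) {t : ℝ} (ht : 0 ≤ t) :
    flipBelow a ⁻¹' Iio (-t) = Ioc t a := by
  ext T
  simp only [flipBelow, mem_preimage, mem_Iio, mem_Ioc]
  split_ifs <;> grind

end FlipBelow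

section ExtremalLaw

variable {s : ℝ → ℝ} (hmono : AntitoneOn s (Ici 0)) (hcont : ContinuousOn s (Ici 0)) {a : ℝ}

noncomputable def extremalLaw (a : ℝ) : Measure ℝ :=
  (survivalCDF hmono hcont).measure.map (flipBelow a)

theorem isProbabilityMeasure_extremalLaw (hs0 : s 0 = 1) (hlim : Tendsto s atTop (𝓝 0)) :
    IsProbabilityMeasure (extremalLaw hmono hcont a) :=
  have := (survivalCDF hmono hcont).isProbabilityMeasure
    (tendsto_survivalCDF_atBot hmono hcont hs0) (tendsto_survivalCDF_atTop hmono hcont hlim)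
  Measure.isProbabilityMeasure_map measurable_flipBelow.aemeasurable

theorem extremalLaw_Iic (ha : 0 ≤ a) (x : ℝ) :
    extremalLaw hmono hcont a (Iic x) =
      ENNReal.ofReal (survivalCDF hmono hcont (max a x) - survivalCDF hmono hcont (-x)) := by
  rw [extremalLaw, Measure.map_apply measurable_flipBelow measurableSet_Iic,
    flipBelow_preimage_Iic ha, measure_survivalCDF_Icc]

theorem extremalLaw_Ioi (hs0 : s 0 = 1) (hlim : Tendsto s atTop (𝓝 0)) (ha : 0 ≤ a) {c : ℝ}
    (hc : 0 ≤ c) : extremalLaw hmono hcont a (Ioi c) = ENNReal.ofReal (s (max c a)) := by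
  rw [extremalLaw, Measure.map_apply measurable_flipBelow measurableSet_Ioi,
    flipBelow_preimage_Ioi ha hc, measure_survivalCDF_Iio_union_Ioi hmono hcont hs0 hlim
      (neg_nonpos.2 hc) (le_max_of_le_right ha)]

theorem extremalLaw_Iio_neg (ha : 0 ≤ a) {t : ℝ} (ht : 0 ≤ t) :
    extremalLaw hmono hcont a (Iio (-t)) = ENNReal.ofReal (s t - s a) := by
  rw [extremalLaw, Measure.map_apply measurable_flipBelow measurableSet_Iio,
    flipBelow_preimage_Iio_neg ha ht, StieltjesFunction.measure_Ioc,
    survivalCDF_of_nonneg hmono hcont ha, survivalCDF_of_nonneg hmono hcont ht,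
    sub_sub_sub_cancel_left]

theorem extremalLaw_abs_gt (hs0 : s 0 = 1) (hlim : Tendsto s atTop (𝓝 0)) {t : ℝ} (ht : 0 ≤ t) :
    extremalLaw hmono hcont a {x | t < |x|} = ENNReal.ofReal (s t) := by
  have hset : {x : ℝ | t < |x|} = Iio (-t) ∪ Ioi t := by
    ext x; simp only [mem_ofPred_eq, lt_abs, mem_union, mem_Iio, mem_Ioi]; grind
  rw [extremalLaw, Measure.map_apply measurable_flipBelow
    (measurableSet_lt measurable_const continuous_abs.measurable)]
  simp only [preimage_ofPred_eq, abs_flipBelow]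
  rw [hset, measure_survivalCDF_Iio_union_Ioi hmono hcont hs0 hlim (neg_nonpos.2 ht) ht]

theorem integrable_id_extremalLaw (hs0 : s 0 = 1) (hlim : Tendsto s atTop (𝓝 0))
    (hint : IntegrableOn s (Ioi 0)) : Integrable (fun x ↦ x) (extremalLaw hmono hcont a) :=
  integrable_id_of_measure_abs_gt hint fun _ ht ↦ extremalLaw_abs_gt hmono hcont hs0 hlim ht.le


theorem toReal_extremalLaw_Iic {t₀ : ℝ} (ht₀ : 0 ≤ t₀) (hone : ∀ t ∈ Icc 0 t₀, s t = 1)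
    (ha : t₀ < a) (x : ℝ) :
    (extremalLaw hmono hcont a (Iic x)).toReal =
      if x ≤ -a then 0
      else if x ≤ -t₀ then s (-x) - s a
      else if x < a then 1 - s a
      else 1 - s x := by
  have ha0 : 0 ≤ a := ht₀.trans ha.le
  have hs0 : s 0 = 1 := hone 0 ⟨le_rfl, ht₀⟩
  have hsa : s a ≤ 1 := hs0 ▸ hmono (mem_Ici.2 le_rfl) (mem_Ici.2 ha0) ha0
  rw [extremalLaw_Iic hmono hcont ha0]
  split_ifs with h₁ h₂ h₃
  · have hax : a ≤ -x := by linarith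
    rw [max_eq_left (show x ≤ a by linarith), survivalCDF_of_nonneg hmono hcont ha0,
      survivalCDF_of_nonneg hmono hcont (ha0.trans hax), ENNReal.ofReal_of_nonpos,
      ENNReal.toReal_zero]
    linarith [hmono (mem_Ici.2 ha0) (mem_Ici.2 (ha0.trans hax)) hax]
  · have hx0 : 0 ≤ -x := by linarith
    have hxa : -x ≤ a := by linarith
    rw [max_eq_left (show x ≤ a by linarith), survivalCDF_of_nonneg hmono hcont ha0,
      survivalCDF_of_nonneg hmono hcont hx0, ENNReal.toReal_ofReal]
    · ring
    · linarith [hmono (mem_Ici.2 hx0) (mem_Ici.2 ha0) hxa]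
  · rw [max_eq_left h₃.le, survivalCDF_of_nonneg hmono hcont ha0, survivalCDF_apply,
      hone _ ⟨le_max_right _ _, max_le (by linarith) ht₀⟩, sub_self, sub_zero,
      ENNReal.toReal_ofReal (by linarith)]
  · have hx0 : 0 ≤ x := by linarith
    rw [max_eq_right (not_lt.1 h₃), survivalCDF_of_nonneg hmono hcont hx0,
      survivalCDF_of_nonpos hmono hcont hs0 (neg_nonpos.2 hx0), sub_zero, ENNReal.toReal_ofReal]
    linarith [hmono (mem_Ici.2 le_rfl) (mem_Ici.2 hx0) hx0]

theorem integral_max_sub_zero_extremalLaw (hnonneg : ∀ t ∈ Ici (0 : ℝ), 0 ≤ s t) (hs0 : s 0 = 1)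
    (hlim : Tendsto s atTop (𝓝 0)) (hint : IntegrableOn s (Ioi 0)) (ha : 0 ≤ a) {u : ℝ}
    (hu : 0 ≤ u) :
    ∫ x, max (x - u) 0 ∂extremalLaw hmono hcont a = ∫ t in Ioi u, s (max t a) := by
  have := isProbabilityMeasure_extremalLaw hmono hcont (a := a) hs0 hlim
  rw [integral_max_sub_zero_eq_setIntegral_Ioi
    (integrable_id_extremalLaw hmono hcont hs0 hlim hint)]
  refine setIntegral_congr_fun measurableSet_Ioi fun t ht ↦ ?_
  rw [measureReal_def, extremalLaw_Ioi hmono hcont hs0 hlim ha (hu.trans (mem_Ioi.1 ht).le),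
    ENNReal.toReal_ofReal (hnonneg _ (le_max_of_le_right ha))]

theorem integral_max_neg_zero_extremalLaw (hs0 : s 0 = 1) (hlim : Tendsto s atTop (𝓝 0))
    (hint : IntegrableOn s (Ioi 0)) (ha : 0 ≤ a) :
    ∫ x, max (-x) 0 ∂extremalLaw hmono hcont a = ∫ t in Ioi 0, max (s t - s a) 0 := by
  rw [integral_max_neg_zero_eq_setIntegral_Ioi
    (integrable_id_extremalLaw hmono hcont hs0 hlim hint)]
  refine setIntegral_congr_fun measurableSet_Ioi fun t ht ↦ ?_
  rw [measureReal_def, extremalLaw_Iio_neg hmono hcont ha (mem_Ioi.1 ht).le,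
    ENNReal.toReal_ofReal']

theorem integral_max_sub_zero_extremalLaw_of_le (hnonneg : ∀ t ∈ Ici (0 : ℝ), 0 ≤ s t)
    (hs0 : s 0 = 1) (hlim : Tendsto s atTop (𝓝 0)) (hint : IntegrableOn s (Ioi 0)) (ha : 0 ≤ a)
    (hHa : a * s a + ∫ t in Ioi a, s t = (∫ t in Ioi 0, s t) / 2) {u : ℝ} (hu : 0 ≤ u)
    (hua : u ≤ a) :
    ∫ x, max (x - u) 0 ∂extremalLaw hmono hcont a = (∫ t in Ioi 0, s t) / 2 - s a * u := by
  rw [integral_max_sub_zero_extremalLaw hmono hcont hnonneg hs0 hlim hint ha hu,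
    setIntegral_Ioi_comp_max_of_le (hint.mono_set (Ioi_subset_Ioi ha)) hua]
  linarith

theorem integral_extremalLaw_eq_zero (hnonneg : ∀ t ∈ Ici (0 : ℝ), 0 ≤ s t) (hs0 : s 0 = 1)
    (hlim : Tendsto s atTop (𝓝 0)) (hint : IntegrableOn s (Ioi 0)) (ha : 0 ≤ a)
    (hHa : a * s a + ∫ t in Ioi a, s t = (∫ t in Ioi 0, s t) / 2) :
    ∫ x, x ∂extremalLaw hmono hcont a = 0 := by
  rw [integral_eq_integral_pos_part_sub_integral_neg_part
    (integrable_id_extremalLaw hmono hcont hs0 hlim hint)]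
  simp only [Real.coe_toNNReal']
  have hpos := integral_max_sub_zero_extremalLaw_of_le hmono hcont hnonneg hs0 hlim hint ha hHa
    le_rfl ha
  simp only [sub_zero, mul_zero] at hpos
  rw [hpos, integral_max_neg_zero_extremalLaw hmono hcont hs0 hlim hint ha,
    setIntegral_Ioi_max_sub_zero hmono hint ha]
  linarith

end ExtremalLaw

theorem stmt6_general
    (s : ℝ → ℝ)
    (hs01 : ∀ t ∈ Set.Ici (0 : ℝ), s t ∈ Set.Icc (0 : ℝ) 1)
    (hmono : AntitoneOn s (Set.Ici 0))
    (hcont : ContinuousOn s (Set.Ici 0))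
    (hint : IntegrableOn s (Set.Ioi 0))
    (t₀ : ℝ) (ht₀ : 0 ≤ t₀)
    (hone : ∀ t ∈ Set.Icc 0 t₀, s t = 1)
    (a : ℝ) (ha : t₀ < a)
    (hHa : a * s a + ∫ t in Set.Ioi a, s t = (∫ t in Set.Ioi (0 : ℝ), s t) / 2) :
    ∃ ν : Measure ℝ, IsProbabilityMeasure ν ∧
      (∀ x : ℝ, (ν (Set.Iic x)).toReal =
        if x ≤ -a then 0
        else if x ≤ -t₀ then s (-x) - s a
        else if x < a then 1 - s a
        else 1 - s x) ∧
      Integrable (fun x => x) ν ∧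
      (∀ t : ℝ, 0 ≤ t → (ν {x | t < |x|}).toReal = s t) ∧
      (∫ x, x ∂ν) = 0 ∧
      (∀ u : ℝ, 0 ≤ u →
        (∫ x, max (x - u) 0 ∂ν) =
          if u ≤ a then (∫ t in Set.Ioi (0 : ℝ), s t) / 2 - s a * u
          else ∫ t in Set.Ioi u, s t) := by
  have hnonneg : ∀ t ∈ Ici (0 : ℝ), 0 ≤ s t := fun t ht ↦ (hs01 t ht).1
  have hs0 : s 0 = 1 := hone 0 ⟨le_rfl, ht₀⟩
  have ha0 : 0 ≤ a := ht₀.trans ha.le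
  have hlim := hmono.tendsto_atTop_zero_of_integrableOn hnonneg hint
  refine ⟨extremalLaw hmono hcont a, isProbabilityMeasure_extremalLaw hmono hcont hs0 hlim,
    toReal_extremalLaw_Iic hmono hcont ht₀ hone ha,
    integrable_id_extremalLaw hmono hcont hs0 hlim hint, fun t ht ↦ ?_,
    integral_extremalLaw_eq_zero hmono hcont hnonneg hs0 hlim hint ha0 hHa, fun u hu ↦ ?_⟩
  · rw [extremalLaw_abs_gt hmono hcont hs0 hlim ht, ENNReal.toReal_ofReal (hnonneg t ht)]
  · split_ifs with hua
    · exact integral_max_sub_zero_extremalLaw_of_le hmono hcont hnonneg hs0 hlim hint ha0 hHa hu hua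
    · rw [integral_max_sub_zero_extremalLaw hmono hcont hnonneg hs0 hlim hint ha0 hu,
        setIntegral_Ioi_comp_max_of_ge (le_of_not_ge hua)]

/-- Extremizer attaining the stop-loss envelope: in the setting of the sharp stop-loss
envelope (`s : [0,∞) → [0,1]` nonincreasing, continuous, integrable, with `s ≡ 1` on
`[0, t₀]` and strictly decreasing on `[t₀, ∞)`, and `a > t₀` solving
`H_s(a) = B_s = (∫₀^∞ s)/2`, `p₀ = s(a)`), the function
`F⋆(x) = 0` for `x ≤ −a`, `s(−x) − p₀` for `−a < x ≤ −t₀`, `1 − p₀` for `−t₀ < x < a`,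
`1 − s(x)` for `x ≥ a`, is a cumulative distribution function: there is a probability
measure `ν` on `ℝ` with `ν(−∞, x] = F⋆(x)` for all `x`; moreover the random variable `X⋆`
with law `ν` is integrable and satisfies `P(|X⋆| > t) = s(t)` for all `t ≥ 0`,
`E[X⋆] = 0`, and `E[(X⋆ − u)₊] = J_s(u)` for all `u ≥ 0`. -/
theorem stmt6
    (s : ℝ → ℝ)
    (hs01 : ∀ t ∈ Set.Ici (0 : ℝ), s t ∈ Set.Icc (0 : ℝ) 1)
    (hmono : AntitoneOn s (Set.Ici 0))
    (hcont : ContinuousOn s (Set.Ici 0))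
    (hint : IntegrableOn s (Set.Ioi 0))
    (t₀ : ℝ) (ht₀ : 0 ≤ t₀)
    (hone : ∀ t ∈ Set.Icc 0 t₀, s t = 1)
    (hstrict : StrictAntiOn s (Set.Ici t₀))
    (a : ℝ) (ha : t₀ < a)
    (hHa : a * s a + ∫ t in Set.Ioi a, s t = (∫ t in Set.Ioi (0 : ℝ), s t) / 2) :
    ∃ ν : Measure ℝ, IsProbabilityMeasure ν ∧
      (∀ x : ℝ, (ν (Set.Iic x)).toReal =
        if x ≤ -a then 0
        else if x ≤ -t₀ then s (-x) - s a
        else if x < a then 1 - s a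
        else 1 - s x) ∧
      Integrable (fun x => x) ν ∧
      (∀ t : ℝ, 0 ≤ t → (ν {x | t < |x|}).toReal = s t) ∧
      (∫ x, x ∂ν) = 0 ∧
      (∀ u : ℝ, 0 ≤ u →
        (∫ x, max (x - u) 0 ∂ν) =
          if u ≤ a then (∫ t in Set.Ioi (0 : ℝ), s t) / 2 - s a * u
          else ∫ t in Set.Ioi u, s t) :=
  stmt6_general s hs01 hmono hcont hint t₀ ht₀ hone a ha hHa
end
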